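/- arXiv:1201.5321 — 6 statements merged into one kernel-verified Lean document; each statement's English description precedes it below -/
import Mathlib

section
/- Let b : ℝ → ℝ be a left-continuous increasing function and let B be a standard Brownian motion started at 0. Define σ_b = inf{t > 0 : B_t > b(t)} and τ_b = inf{t > 0 : B_t ≥ b(t)}. Then σ_b = τ_b almost surely. -/
open MeasureTheory ProbabilityTheory Filter Set
open scoped ENNReal NNReal

noncomputable section

variable {Ω : Type*} [MeasurableSpace Ω]

/-- `B` is a standard Brownian motion started at `0` under the probability measure `P`:
continuous paths, `B 0 = 0`, Gaussian increments, and increments independent of the past. -/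
structure IsStandardBM (P : Measure Ω) (B : ℝ → Ω → ℝ) : Prop where
  isProb : IsProbabilityMeasure P
  meas : ∀ t, Measurable (B t)
  init : ∀ ω, B 0 ω = 0
  cont : ∀ ω, Continuous fun t => B t ω
  gauss : ∀ s t : ℝ, 0 ≤ s → s ≤ t →
    P.map (fun ω => B t ω - B s ω) = gaussianReal 0 (Real.toNNReal (t - s))
  indep : ∀ s t : ℝ, 0 ≤ s → s ≤ t →
    Indep (MeasurableSpace.comap (fun ω => B t ω - B s ω) inferInstance)
      (⨆ u ∈ Set.Icc (0:ℝ) s, MeasurableSpace.comap (B u) inferInstance) P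

/-- First entry time after time `0` of the path `t ↦ B t ω` into the time-dependent region
described by `p`, with the convention `inf ∅ = ∞`. -/
def hitTime (B : ℝ → Ω → ℝ) (p : ℝ → ℝ → Prop) (ω : Ω) : ℝ≥0∞ :=
  sInf (ENNReal.ofReal '' {t : ℝ | 0 < t ∧ p t (B t ω)})

/-- Value of the process at the (possibly infinite) random time `τ` (junk value `B 0` if `τ = ∞`). -/
def stoppedValue (B : ℝ → Ω → ℝ) (τ : Ω → ℝ≥0∞) (ω : Ω) : ℝ := B (τ ω).toReal ω

namespace BMAux

lemma map_withDensity_comp {α β : Type*} [MeasurableSpace α] [MeasurableSpace β]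
    (μ : Measure α) {F : α → β} (hF : Measurable F) {g : β → ℝ≥0∞} (hg : Measurable g) :
    (μ.withDensity (g ∘ F)).map F = (μ.map F).withDensity g := by
  ext s hs
  rw [Measure.map_apply hF hs, withDensity_apply _ (hF hs), withDensity_apply _ hs,
    setLIntegral_map hs hg hF]
  rfl

lemma prod_withDensity {α β : Type*} [MeasurableSpace α] [MeasurableSpace β]
    (μ : Measure α) (ν : Measure β) [SigmaFinite μ] [SigmaFinite ν]
    {f : α → ℝ≥0∞} {g : β → ℝ≥0∞} (hf : Measurable f) (hg : Measurable g)
    (hf' : ∀ x, f x ≠ ∞) (hg' : ∀ x, g x ≠ ∞) :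
    (μ.withDensity f).prod (ν.withDensity g)
      = (μ.prod ν).withDensity (fun p => f p.1 * g p.2) := by
  haveI := SigmaFinite.withDensity_of_ne_top' (μ := μ) hf'
  haveI := SigmaFinite.withDensity_of_ne_top' (μ := ν) hg'
  refine Measure.prod_eq fun s t hs ht => ?_
  rw [withDensity_apply _ (hs.prod ht), ← Measure.prod_restrict,
    lintegral_prod_mul hf.aemeasurable hg.aemeasurable,
    withDensity_apply _ hs, withDensity_apply _ ht]

lemma indep_mono {m₁ m₂ m₁' m₂' mΩ : MeasurableSpace Ω} {P : Measure Ω}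
    (h : Indep (_mΩ := mΩ) m₁ m₂ P) (hle₁ : m₁' ≤ m₁) (hle₂ : m₂' ≤ m₂) :
    Indep (_mΩ := mΩ) m₁' m₂' P :=
  fun t1 t2 h1 h2 => h t1 t2 (hle₁ _ h1) (hle₂ _ h2)

lemma indepFun_of_indep_comap {mΩ : MeasurableSpace Ω} {P : Measure Ω}
    {β γ : Type*} [mβ : MeasurableSpace β] [mγ : MeasurableSpace γ]
    {f : Ω → β} {g : Ω → γ}
    (h : Indep (MeasurableSpace.comap f mβ) (MeasurableSpace.comap g mγ) P) :
    IndepFun f g P := h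

lemma gauss_shift (c : ℝ) {v : ℝ≥0} (hv : v ≠ 0) :
    gaussianReal 0 v = (gaussianReal (-(c * v)) v).withDensity
      (fun x => ENNReal.ofReal (Real.exp (c * x + c ^ 2 * v / 2))) := by
  rw [gaussianReal_of_var_ne_zero _ hv, gaussianReal_of_var_ne_zero _ hv,
    ← withDensity_mul _ (measurable_gaussianPDF _ _)
      (by fun_prop)]
  congr 1
  ext x
  simp only [Pi.mul_apply, gaussianPDF]
  rw [← ENNReal.ofReal_mul (gaussianPDFReal_nonneg _ _ _)]
  congr 1
  unfold gaussianPDFReal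
  have hv' : (v : ℝ) ≠ 0 := by exact_mod_cast hv
  have hcomb : ∀ A B C : ℝ, C * Real.exp A * Real.exp B = C * Real.exp (A + B) := by
    intro A B C; rw [mul_assoc, ← Real.exp_add]
  rw [hcomb]
  congr 2
  field_simp
  ring

/-- the vector of values `B r ω - ε r` for `r ∈ J`, as an element of `ℝ → ℝ` (0 off `J`). -/
def vmap (B : ℝ → Ω → ℝ) (ε : ℝ) (J : Finset ℝ) (ω : Ω) : ℝ → ℝ :=
  fun r => if r ∈ J then B r ω - ε * r else 0

/-- Cameron–Martin density depending on the coordinate at time `m`. -/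
def dens (ε m : ℝ) (x : ℝ → ℝ) : ℝ≥0∞ := ENNReal.ofReal (Real.exp (ε * x m + ε ^ 2 * m / 2))

lemma measurable_vmap {B : ℝ → Ω → ℝ} (hm : ∀ t, Measurable (B t)) (ε : ℝ) (J : Finset ℝ) :
    Measurable (vmap B ε J) := by
  apply measurable_pi_lambda
  intro r
  by_cases h : r ∈ J <;> simp only [vmap, h, if_true, if_false]
  · exact (hm r).sub measurable_const
  · exact measurable_const

lemma measurable_dens (ε m : ℝ) : Measurable (dens ε m) := by
  apply Measurable.ennreal_ofReal
  fun_prop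

lemma dens_ne_top (ε m : ℝ) (x : ℝ → ℝ) : dens ε m x ≠ ∞ := ENNReal.ofReal_ne_top

lemma law_incr_shift {P : Measure Ω} {B : ℝ → Ω → ℝ} (hB : IsStandardBM P B)
    {s t : ℝ} (hs : 0 ≤ s) (hst : s ≤ t) (c : ℝ) :
    P.map (fun ω => B t ω - B s ω - c) = gaussianReal (-c) (Real.toNNReal (t - s)) := by
  have h1 : (fun ω => B t ω - B s ω - c) = (· + (-c)) ∘ (fun ω => B t ω - B s ω) := by
    funext ω; simp [sub_eq_add_neg]
  rw [h1, ← Measure.map_map (f := fun ω => B t ω - B s ω) (measurable_add_const _) (((hB.meas t).sub (hB.meas s))),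
    hB.gauss s t hs hst, gaussianReal_map_add_const]
  norm_num

/-- Finite-dimensional Cameron–Martin identity. -/
theorem fd_claim {P : Measure Ω} {B : ℝ → Ω → ℝ} (hB : IsStandardBM P B)
    (ε : ℝ) (J : Finset ℝ) :
    ∀ m : ℝ, m ∈ J → (∀ r ∈ J, 0 < r ∧ r ≤ m) →
      P.map (vmap B 0 J) = (P.map (vmap B ε J)).withDensity (dens ε m) := by
  haveI : IsProbabilityMeasure P := hB.isProb
  induction J using Finset.induction_on_max with
  | empty => intro m hm; exact absurd hm (Finset.notMem_empty m)
  | insert a s ha IH =>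
    intro m hm hbd
    have hma : m = a := by
      rcases Finset.mem_insert.mp hm with h | h
      · exact h
      · exact absurd (hbd a (Finset.mem_insert_self a s)).2 (not_le.mpr (ha m h))
    subst hma
    have hapos : 0 < m := (hbd m (Finset.mem_insert_self m s)).1
    -- `m` is the newly inserted maximal element
    rcases s.eq_empty_or_nonempty with rfl | hne
    · -- singleton case
      have hone : ∀ δ : ℝ, vmap B δ {m} =
          (fun d : ℝ => fun r : ℝ => if r = m then d else 0) ∘ (fun ω => B m ω - δ * m) := by
        intro δ; funext ω; funext r
        simp only [vmap, Finset.mem_singleton, Function.comp_apply]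
        split
        · next h => subst h; rfl
        · rfl
      have hF' : Measurable (fun d : ℝ => fun r : ℝ => if r = m then d else 0) := by
        apply measurable_pi_lambda
        intro r
        by_cases h : r = m <;> simp only [h, if_true, if_false]
        · exact measurable_id
        · exact measurable_const
      have hvne : (Real.toNNReal m) ≠ 0 := by
        simp only [ne_eq, Real.toNNReal_eq_zero, not_le]; exact hapos
      have hlaw : ∀ δ : ℝ, P.map (fun ω => B m ω - δ * m)
          = gaussianReal (-(δ * m)) (Real.toNNReal m) := by
        intro δ
        have h0 : (fun ω => B m ω - δ * m) = (fun ω => B m ω - B 0 ω - δ * m) := by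
          funext ω; rw [hB.init ω, sub_zero]
        rw [h0, law_incr_shift hB le_rfl hapos.le, sub_zero]
      have hcoe : ((Real.toNNReal m : ℝ≥0) : ℝ) = m := Real.coe_toNNReal m hapos.le
      have hd : (dens ε m) ∘ (fun d : ℝ => fun r : ℝ => if r = m then d else 0)
          = fun x : ℝ => ENNReal.ofReal (Real.exp (ε * x + ε ^ 2 * (Real.toNNReal m : ℝ≥0) / 2)) := by
        funext d
        simp only [Function.comp_apply, dens, hcoe]
        norm_num
      calc P.map (vmap B 0 {m})
          = (P.map (fun ω => B m ω - 0 * m)).map (fun d : ℝ => fun r : ℝ => if r = m then d else 0) := by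
            rw [Measure.map_map (f := fun ω => B m ω - 0 * m) hF' ((hB.meas m).sub measurable_const), ← hone]
        _ = (gaussianReal 0 (Real.toNNReal m)).map (fun d : ℝ => fun r : ℝ => if r = m then d else 0) := by
            rw [hlaw 0]; norm_num
        _ = ((gaussianReal (-(ε * m)) (Real.toNNReal m)).withDensity
              ((dens ε m) ∘ (fun d : ℝ => fun r : ℝ => if r = m then d else 0))).map
              (fun d : ℝ => fun r : ℝ => if r = m then d else 0) := by
            rw [hd, gauss_shift ε hvne, hcoe]
        _ = ((gaussianReal (-(ε * m)) (Real.toNNReal m)).map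
              (fun d : ℝ => fun r : ℝ => if r = m then d else 0)).withDensity (dens ε m) := by
            rw [map_withDensity_comp _ hF' (measurable_dens ε m)]
        _ = (P.map (vmap B ε {m})).withDensity (dens ε m) := by
            rw [hone ε, ← Measure.map_map (f := fun ω => B m ω - ε * m) hF' ((hB.meas m).sub measurable_const), hlaw ε]
    · -- nonempty previous set
      set m' := s.max' hne with hm'def
      have hm'mem : m' ∈ s := s.max'_mem hne
      have hm'lt : m' < m := ha m' hm'mem
      have hm'pos : 0 < m' := (hbd m' (Finset.mem_insert_of_mem hm'mem)).1
      have hIH : P.map (vmap B 0 s) = (P.map (vmap B ε s)).withDensity (dens ε m') :=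
        IH m' hm'mem (fun r hr => ⟨(hbd r (Finset.mem_insert_of_mem hr)).1, Finset.le_max' s r hr⟩)
      have hΔδmeas : ∀ δ : ℝ, Measurable (fun ω => B m ω - B m' ω - δ * (m - m')) :=
        fun δ => ((hB.meas m).sub (hB.meas m')).sub measurable_const
      have hGmeas : ∀ δ : ℝ, @Measurable Ω (ℝ → ℝ)
          (⨆ u ∈ Set.Icc (0:ℝ) m', MeasurableSpace.comap (B u) inferInstance) _ (vmap B δ s) := by
        intro δ
        apply @measurable_pi_lambda Ω ℝ (fun _ => ℝ)
          (⨆ u ∈ Set.Icc (0:ℝ) m', MeasurableSpace.comap (B u) inferInstance)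
          (fun _ => inferInstance)
        intro r
        by_cases h : r ∈ s <;> simp only [vmap, h, if_true, if_false]
        · have hle : MeasurableSpace.comap (B r) inferInstance ≤
              (⨆ u ∈ Set.Icc (0:ℝ) m', MeasurableSpace.comap (B u) inferInstance) :=
            le_iSup₂ (f := fun (u : ℝ) (_ : u ∈ Set.Icc (0:ℝ) m') =>
              MeasurableSpace.comap (B u) inferInstance) r
              ⟨(hbd r (Finset.mem_insert_of_mem h)).1.le, Finset.le_max' s r h⟩
          exact (Measurable.of_comap_le hle).sub measurable_const
        · exact measurable_const
      have hInd : ∀ δ : ℝ, IndepFun (vmap B δ s) (fun ω => B m ω - B m' ω - δ * (m - m')) P := by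
        intro δ
        refine IndepFun.symm (indepFun_of_indep_comap
          (indep_mono (hB.indep m' m hm'pos.le hm'lt.le) ?_ ?_))
        · have hco : (fun ω => B m ω - B m' ω - δ * (m - m'))
              = (fun x : ℝ => x - δ * (m - m')) ∘ (fun ω => B m ω - B m' ω) := rfl
          rw [hco, ← MeasurableSpace.comap_comp]
          exact MeasurableSpace.comap_mono
            (measurable_iff_comap_le.mp (measurable_sub_const _))
        · exact measurable_iff_comap_le.mp (hGmeas δ)
      have hpair : ∀ δ : ℝ, P.map (fun ω => (vmap B δ s ω, B m ω - B m' ω - δ * (m - m')))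
          = (P.map (vmap B δ s)).prod (P.map (fun ω => B m ω - B m' ω - δ * (m - m'))) :=
        fun δ => (indepFun_iff_map_prod_eq_prod_map_map
          (measurable_vmap hB.meas δ s).aemeasurable (hΔδmeas δ).aemeasurable).mp (hInd δ)
      set F : (ℝ → ℝ) × ℝ → (ℝ → ℝ) :=
        fun p => fun r : ℝ => if r = m then p.1 m' + p.2 else p.1 r with hFdef
      have hFmeas : Measurable F := by
        apply measurable_pi_lambda
        intro r
        by_cases h : r = m <;> simp only [hFdef, h, if_true, if_false]
        · exact ((measurable_pi_apply m').comp measurable_fst).add measurable_snd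
        · exact (measurable_pi_apply r).comp measurable_fst
      have hcomp : ∀ δ : ℝ, vmap B δ (insert m s)
          = F ∘ (fun ω => (vmap B δ s ω, B m ω - B m' ω - δ * (m - m'))) := by
        intro δ; funext ω; funext r
        simp only [vmap, Function.comp_apply, hFdef]
        by_cases hr : r = m
        · subst hr
          simp only [Finset.mem_insert_self, if_true, if_pos hm'mem]
          ring
        · simp only [Finset.mem_insert, hr, false_or, if_false]
      have hvne₂ : (Real.toNNReal (m - m')) ≠ 0 := by
        simp only [ne_eq, Real.toNNReal_eq_zero, not_le, sub_pos]; exact hm'lt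
      have hcoe₂ : ((Real.toNNReal (m - m') : ℝ≥0) : ℝ) = m - m' :=
        Real.coe_toNNReal _ (sub_pos.mpr hm'lt).le
      set g₂ : ℝ → ℝ≥0∞ :=
        fun d => ENNReal.ofReal (Real.exp (ε * d + ε ^ 2 * (m - m') / 2)) with hg₂def
      have hg₂meas : Measurable g₂ := by
        apply Measurable.ennreal_ofReal
        exact ((measurable_id.const_mul ε).add_const _).exp
      have hlawΔ : ∀ δ : ℝ, P.map (fun ω => B m ω - B m' ω - δ * (m - m'))
          = gaussianReal (-(δ * (m - m'))) (Real.toNNReal (m - m')) :=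
        fun δ => law_incr_shift hB hm'pos.le hm'lt.le _
      have hg₂ : P.map (fun ω => B m ω - B m' ω - 0 * (m - m'))
          = (P.map (fun ω => B m ω - B m' ω - ε * (m - m'))).withDensity g₂ := by
        rw [hlawΔ 0, hlawΔ ε]
        have h00 : -(0 * (m - m')) = (0 : ℝ) := by norm_num
        rw [h00]
        have := gauss_shift ε hvne₂
        rw [hcoe₂] at this
        exact this
      have hdens_eq : (fun p : (ℝ → ℝ) × ℝ => dens ε m' p.1 * g₂ p.2) = (dens ε m) ∘ F := by
        funext p
        simp only [Function.comp_apply, dens, hFdef, hg₂def, ite_true, eq_self_iff_true]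
        rw [← ENNReal.ofReal_mul (Real.exp_nonneg _), ← Real.exp_add]
        congr 2
        ring
      haveI : IsProbabilityMeasure (P.map (vmap B ε s)) :=
        Measure.isProbabilityMeasure_map (measurable_vmap hB.meas ε s).aemeasurable
      haveI : IsProbabilityMeasure (P.map (fun ω => B m ω - B m' ω - ε * (m - m'))) :=
        Measure.isProbabilityMeasure_map (hΔδmeas ε).aemeasurable
      calc P.map (vmap B 0 (insert m s))
          = (P.map (fun ω => (vmap B 0 s ω, B m ω - B m' ω - 0 * (m - m')))).map F := by
            rw [Measure.map_map hFmeas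
              ((measurable_vmap hB.meas 0 s).prodMk (hΔδmeas 0)), ← hcomp 0]
        _ = ((P.map (vmap B 0 s)).prod
              (P.map (fun ω => B m ω - B m' ω - 0 * (m - m')))).map F := by rw [hpair 0]
        _ = (((P.map (vmap B ε s)).withDensity (dens ε m')).prod
              ((P.map (fun ω => B m ω - B m' ω - ε * (m - m'))).withDensity g₂)).map F := by
            rw [hIH, hg₂]
        _ = (((P.map (vmap B ε s)).prod
              (P.map (fun ω => B m ω - B m' ω - ε * (m - m')))).withDensity
              ((dens ε m) ∘ F)).map F := by
            rw [prod_withDensity _ _ (measurable_dens ε m') hg₂meas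
              (dens_ne_top ε m') (fun x => ENNReal.ofReal_ne_top), hdens_eq]
        _ = (((P.map (vmap B ε s)).prod
              (P.map (fun ω => B m ω - B m' ω - ε * (m - m')))).map F).withDensity
              (dens ε m) := by
            rw [map_withDensity_comp _ hFmeas (measurable_dens ε m)]
        _ = (P.map (vmap B ε (insert m s))).withDensity (dens ε m) := by
            rw [← hpair ε, Measure.map_map hFmeas
              ((measurable_vmap hB.meas ε s).prodMk (hΔδmeas ε)), ← hcomp ε]

/-- rationals in `(0, q]`. -/
def ratQ (q : ℝ) : Set ℝ := {r : ℝ | (∃ p : ℚ, (p : ℝ) = r) ∧ 0 < r ∧ r ≤ q}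

/-- rationals in `[h, q]`. -/
def ratQ2 (h q : ℝ) : Set ℝ := {r : ℝ | (∃ p : ℚ, (p : ℝ) = r) ∧ h ≤ r ∧ r ≤ q}

def stayEv (B : ℝ → Ω → ℝ) (b : ℝ → ℝ) (ε : ℝ) (T : Set ℝ) : Set Ω :=
  {ω | ∀ r ∈ T, B r ω - ε * r ≤ b r}

def touchEv (B : ℝ → Ω → ℝ) (b : ℝ → ℝ) (ε : ℝ) (k : ℕ) (T : Set ℝ) : Set Ω :=
  {ω | ∃ r ∈ T, b r - ((k : ℝ) + 1)⁻¹ < B r ω - ε * r}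

def AEv (B : ℝ → Ω → ℝ) (b : ℝ → ℝ) (ε h q : ℝ) : Set Ω :=
  stayEv B b ε (ratQ q) ∩ ⋂ k : ℕ, touchEv B b ε k (ratQ2 h q)

lemma countable_ratQ (q : ℝ) : (ratQ q).Countable :=
  (Set.countable_range ((↑) : ℚ → ℝ)).mono (fun _r hr => hr.1.imp (fun _p hp => hp))

lemma countable_ratQ2 (h q : ℝ) : (ratQ2 h q).Countable :=
  (Set.countable_range ((↑) : ℚ → ℝ)).mono (fun _r hr => hr.1.imp (fun _p hp => hp))

lemma measurableSet_stayEv {B : ℝ → Ω → ℝ} (hm : ∀ t, Measurable (B t)) (b : ℝ → ℝ) (ε : ℝ)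
    {T : Set ℝ} (hT : T.Countable) : MeasurableSet (stayEv B b ε T) := by
  have : stayEv B b ε T = ⋂ r ∈ T, {ω | B r ω - ε * r ≤ b r} := by
    ext ω; simp [stayEv]
  rw [this]
  exact MeasurableSet.biInter hT fun r _ =>
    measurableSet_le ((hm r).sub measurable_const) measurable_const

lemma measurableSet_touchEv {B : ℝ → Ω → ℝ} (hm : ∀ t, Measurable (B t)) (b : ℝ → ℝ) (ε : ℝ)
    (k : ℕ) {T : Set ℝ} (hT : T.Countable) : MeasurableSet (touchEv B b ε k T) := by
  have : touchEv B b ε k T = ⋃ r ∈ T, {ω | b r - ((k : ℝ) + 1)⁻¹ < B r ω - ε * r} := by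
    ext ω; simp [touchEv]
  rw [this]
  exact MeasurableSet.biUnion hT fun r _ =>
    measurableSet_lt measurable_const ((hm r).sub measurable_const)

lemma measurableSet_AEv {B : ℝ → Ω → ℝ} (hm : ∀ t, Measurable (B t)) (b : ℝ → ℝ)
    (ε h q : ℝ) : MeasurableSet (AEv B b ε h q) :=
  (measurableSet_stayEv hm b ε (countable_ratQ q)).inter
    (MeasurableSet.iInter fun k => measurableSet_touchEv hm b ε k (countable_ratQ2 h q))

/-- Pathwise: if the weak hitting time is strictly smaller than the strict one, the path lies in
one of the countably many "touching" events. -/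
lemma path_touches {f b : ℝ → ℝ} (hf : Continuous f) (hmono : Monotone b)
    (hlt : sInf (ENNReal.ofReal '' {t | 0 < t ∧ b t ≤ f t})
      < sInf (ENNReal.ofReal '' {t | 0 < t ∧ b t < f t})) :
    ∃ q h : ℚ, 0 < (h : ℝ) ∧ (h : ℝ) < (q : ℝ) ∧
      (∀ r ∈ ratQ (q : ℝ), f r - 0 * r ≤ b r) ∧
      (∀ k : ℕ, ∃ r ∈ ratQ2 (h : ℝ) (q : ℝ), b r - ((k : ℝ) + 1)⁻¹ < f r - 0 * r) := by
  set σ := sInf (ENNReal.ofReal '' {t | 0 < t ∧ b t < f t}) with hσdef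
  obtain ⟨y, ⟨s, ⟨hs_pos, hs_ge⟩, rfl⟩, hylt⟩ := sInf_lt_iff.mp hlt
  -- find a rational `q` with `s < q` and `ofReal q < σ`
  obtain ⟨q, hsq, hqσ⟩ : ∃ q : ℚ, s < (q : ℝ) ∧ ENNReal.ofReal (q : ℝ) < σ := by
    by_cases hσtop : σ = ⊤
    · obtain ⟨q, hq⟩ := exists_rat_gt s
      exact ⟨q, hq, by rw [hσtop]; exact ENNReal.ofReal_lt_top⟩
    · have hs' : s < σ.toReal :=
        (ENNReal.ofReal_lt_iff_lt_toReal hs_pos.le hσtop).mp hylt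
      obtain ⟨q, hq1, hq2⟩ := exists_rat_btwn hs'
      refine ⟨q, hq1, ?_⟩
      have : (0:ℝ) ≤ (q:ℝ) := (hs_pos.trans hq1).le
      rw [ENNReal.ofReal_lt_iff_lt_toReal this hσtop]
      exact hq2
  have hstay : ∀ t : ℝ, 0 < t → t ≤ (q : ℝ) → f t ≤ b t := by
    intro t h0 hq
    by_contra hcon
    have hmem : ENNReal.ofReal t ∈ ENNReal.ofReal '' {t | 0 < t ∧ b t < f t} :=
      ⟨t, ⟨h0, not_le.mp hcon⟩, rfl⟩
    have h1 : σ ≤ ENNReal.ofReal t := sInf_le hmem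
    have h2 : ENNReal.ofReal t ≤ ENNReal.ofReal (q : ℝ) := ENNReal.ofReal_le_ofReal hq
    exact absurd ((h1.trans h2).trans_lt hqσ) (lt_irrefl σ)
  have hfs : f s = b s := le_antisymm (hstay s hs_pos hsq.le) hs_ge
  obtain ⟨h, hh0, hhs⟩ := exists_rat_btwn hs_pos
  refine ⟨q, h, by exact_mod_cast hh0, by exact_mod_cast hhs.trans hsq, ?_, ?_⟩
  · intro r hr
    rw [zero_mul, sub_zero]
    exact hstay r hr.2.1 hr.2.2
  · intro k
    set η : ℝ := ((k : ℝ) + 1)⁻¹ with hηdef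
    have hη : 0 < η := by positivity
    have hcont : ContinuousAt f s := hf.continuousAt
    obtain ⟨δ, hδpos, hδ⟩ := Metric.continuousAt_iff.mp hcont η hη
    have hlow : max (h : ℝ) (s - δ) < s := max_lt hhs (by linarith)
    obtain ⟨r, hr1, hr2⟩ := exists_rat_btwn hlow
    have hrh : (h : ℝ) ≤ (r : ℝ) := (le_max_left _ _).trans hr1.le
    have hrδ : s - δ < (r : ℝ) := (le_max_right _ _).trans_lt hr1
    have hrq : (r : ℝ) ≤ (q : ℝ) := (hr2.trans hsq).le
    refine ⟨(r : ℝ), ⟨⟨r, rfl⟩, hrh, hrq⟩, ?_⟩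
    have hdist : dist (r : ℝ) s < δ := by
      rw [Real.dist_eq, abs_sub_lt_iff]; constructor <;> linarith
    have hfr : |f r - f s| < η := by
      have := hδ hdist
      rwa [Real.dist_eq] at this
    have h1 : f s - η < f r := by
      have := abs_sub_lt_iff.mp hfr
      linarith [this.2]
    have h2 : b (r : ℝ) ≤ b s := hmono hr2.le
    rw [zero_mul, sub_zero]
    calc b (r:ℝ) - η ≤ b s - η := by linarith
    _ = f s - η := by rw [hfs]
    _ < f r := h1

/-- Key disjointness: a path cannot satisfy the stay-and-touch conditions for two different
drifts. -/
lemma path_disjoint {f b : ℝ → ℝ} (hf : Continuous f) (hmono : Monotone b)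
    (hlc : ∀ t : ℝ, Tendsto b (nhdsWithin t (Iio t)) (nhds (b t)))
    {h q ε ε' : ℝ} (hh : 0 < h) (hhq : h ≤ q) (hεε : ε < ε')
    (Hst : ∀ r ∈ ratQ q, f r - ε * r ≤ b r)
    (Htc : ∀ k : ℕ, ∃ r ∈ ratQ2 h q, b r - ((k : ℝ) + 1)⁻¹ < f r - ε' * r) : False := by
  -- choose touching approximations for the drift ε'
  choose r hr1 hr2 using Htc
  have hrIcc : ∀ k, r k ∈ Set.Icc h q := fun k => ⟨(hr1 k).2.1, (hr1 k).2.2⟩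
  obtain ⟨s, hsIcc, φ, hφmono, hφtends⟩ := (isCompact_Icc (a := h) (b := q)).tendsto_subseq hrIcc
  have hspos : 0 < s := hh.trans_le hsIcc.1
  have hsq : s ≤ q := hsIcc.2
  -- the subsequence index tends to infinity
  have hφtop : Tendsto (fun j => ((φ j : ℝ) + 1)) atTop atTop :=
    tendsto_atTop_add_const_right _ 1
      (tendsto_natCast_atTop_atTop.comp hφmono.tendsto_atTop)
  have hηtends : Tendsto (fun j => ((φ j : ℝ) + 1)⁻¹) atTop (nhds 0) :=
    tendsto_inv_atTop_zero.comp hφtop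
  have hval : Tendsto (fun j => f (r (φ j)) - ε' * r (φ j)) atTop (nhds (f s - ε' * s)) :=
    ((hf.tendsto s).comp hφtends).sub (hφtends.const_mul ε')
  -- Step A : f s - ε' * s ≥ b s
  have hA : b s ≤ f s - ε' * s := by
    by_contra hcon
    push_neg at hcon
    set c : ℝ := ((f s - ε' * s) + b s) / 2 with hcdef
    have hc1 : c < b s := by rw [hcdef]; linarith
    have hc2 : f s - ε' * s < c := by rw [hcdef]; linarith
    -- b is eventually above c near s
    have hev : ∀ᶠ t in nhdsWithin s (Iio s), c < b t := (hlc s).eventually (eventually_gt_nhds hc1)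
    rw [eventually_nhdsWithin_iff] at hev
    obtain ⟨δ, hδpos, hδ⟩ := Metric.eventually_nhds_iff.mp hev
    have hbig : ∀ t : ℝ, s - δ < t → c < b t := by
      intro t ht
      rcases lt_or_ge t s with h1 | h1
      · exact hδ (by rw [Real.dist_eq, abs_sub_lt_iff]; constructor <;> linarith) h1
      · exact hc1.trans_le (hmono h1)
    have hev2 : ∀ᶠ j in atTop, s - δ < r (φ j) :=
      hφtends.eventually (eventually_gt_nhds (by linarith : s - δ < s))
    have hev3 : ∀ᶠ j in atTop, c - ((φ j : ℝ) + 1)⁻¹ ≤ f (r (φ j)) - ε' * r (φ j) := by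
      filter_upwards [hev2] with j hj
      have := hr2 (φ j)
      have hcb : c < b (r (φ j)) := hbig _ hj
      linarith
    have hlim : c - 0 ≤ f s - ε' * s :=
      le_of_tendsto_of_tendsto (tendsto_const_nhds.sub hηtends) hval hev3
    rw [sub_zero] at hlim
    linarith
  -- Step B : f s - ε * s ≤ b s
  have hB : f s - ε * s ≤ b s := by
    -- approximate s from below by rationals
    have hchoice : ∀ n : ℕ, ∃ u : ℚ, max (s - ((n : ℝ) + 1)⁻¹) (s / 2) < (u : ℝ) ∧ (u : ℝ) < s := by
      intro n
      apply exists_rat_btwn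
      apply max_lt _ (by linarith)
      have : (0:ℝ) < ((n : ℝ) + 1)⁻¹ := by positivity
      linarith
    choose u hu1 hu2 using hchoice
    have humem : ∀ n, (u n : ℝ) ∈ ratQ q := by
      intro n
      refine ⟨⟨u n, rfl⟩, ?_, ?_⟩
      · have := hu1 n; have h2 : s / 2 < (u n : ℝ) := (le_max_right _ _).trans_lt this
        linarith
      · exact (hu2 n).le.trans hsq
    have hutends : Tendsto (fun n => (u n : ℝ)) atTop (nhds s) := by
      have hlow : Tendsto (fun n : ℕ => s - ((n : ℝ) + 1)⁻¹) atTop (nhds (s - 0)) :=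
        tendsto_const_nhds.sub
          (tendsto_inv_atTop_zero.comp (tendsto_atTop_add_const_right _ 1 tendsto_natCast_atTop_atTop))
      rw [sub_zero] at hlow
      apply tendsto_of_tendsto_of_tendsto_of_le_of_le hlow tendsto_const_nhds
      · intro n; exact ((le_max_left _ _).trans_lt (hu1 n)).le
      · intro n; exact (hu2 n).le
    have hval2 : Tendsto (fun n => f (u n : ℝ) - ε * (u n : ℝ)) atTop (nhds (f s - ε * s)) :=
      ((hf.tendsto s).comp hutends).sub (hutends.const_mul ε)
    refine le_of_tendsto hval2 ?_
    filter_upwards with n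
    calc f (u n : ℝ) - ε * (u n : ℝ) ≤ b (u n : ℝ) := Hst _ (humem n)
    _ ≤ b s := hmono (hu2 n).le
  have : ε' * s ≤ ε * s := by linarith
  have hcon : ε' * s > ε * s := by
    apply mul_lt_mul_of_pos_right hεε hspos
  linarith

lemma stayEv_anti {B : ℝ → Ω → ℝ} {b : ℝ → ℝ} {ε : ℝ} {T T' : Set ℝ} (hTT : T ⊆ T') :
    stayEv B b ε T' ⊆ stayEv B b ε T := fun _ω hω r hr => hω r (hTT hr)

lemma touchEv_mono {B : ℝ → Ω → ℝ} {b : ℝ → ℝ} {ε : ℝ} {k : ℕ} {T T' : Set ℝ} (hTT : T ⊆ T') :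
    touchEv B b ε k T ⊆ touchEv B b ε k T' := fun _ω ⟨r, hr, hx⟩ => ⟨r, hTT hr, hx⟩

lemma touchEv_anti_k {B : ℝ → Ω → ℝ} {b : ℝ → ℝ} {ε : ℝ} {T : Set ℝ} {k k' : ℕ} (hkk : k ≤ k') :
    touchEv B b ε k' T ⊆ touchEv B b ε k T := by
  rintro ω ⟨r, hr, hx⟩
  refine ⟨r, hr, lt_of_le_of_lt ?_ hx⟩
  have h1 : ((k : ℝ) + 1)⁻¹ ≥ ((k' : ℝ) + 1)⁻¹ := by
    apply inv_anti₀ (by positivity)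
    exact_mod_cast Nat.succ_le_succ hkk
  linarith

/-- Finite-dimensional change-of-drift inequality. -/
lemma fd_ineq {P : Measure Ω} {B : ℝ → Ω → ℝ} (hB : IsStandardBM P B) (b : ℝ → ℝ)
    {ε : ℝ} (hε : 0 ≤ ε) {q : ℝ} (F G : Finset ℝ)
    (hFbd : ∀ r ∈ F, 0 < r ∧ r ≤ q) (hqF : q ∈ F) (hGF : G ⊆ F) (k : ℕ) :
    P (stayEv B b 0 ↑F ∩ touchEv B b 0 k ↑G)
      ≤ ENNReal.ofReal (Real.exp (ε * b q + ε ^ 2 * q / 2))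
        * P (stayEv B b ε ↑F ∩ touchEv B b ε k ↑G) := by
  haveI := hB.isProb
  classical
  set S : Set (ℝ → ℝ) :=
    {x | ∀ r ∈ F, x r ≤ b r} ∩ {x | ∃ r ∈ G, b r - ((k : ℝ) + 1)⁻¹ < x r} with hSdef
  have hS : MeasurableSet S := by
    apply MeasurableSet.inter
    · have : {x : ℝ → ℝ | ∀ r ∈ F, x r ≤ b r} = ⋂ r ∈ (F : Set ℝ), {x : ℝ → ℝ | x r ≤ b r} := by
        ext x; simp
      rw [this]
      exact MeasurableSet.biInter F.countable_toSet fun r _ =>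
        measurableSet_le (measurable_pi_apply r) measurable_const
    · have : {x : ℝ → ℝ | ∃ r ∈ G, b r - ((k : ℝ) + 1)⁻¹ < x r}
          = ⋃ r ∈ (G : Set ℝ), {x : ℝ → ℝ | b r - ((k : ℝ) + 1)⁻¹ < x r} := by
        ext x; simp
      rw [this]
      exact MeasurableSet.biUnion G.countable_toSet fun r _ =>
        measurableSet_lt measurable_const (measurable_pi_apply r)
  have hpre : ∀ δ : ℝ, vmap B δ F ⁻¹' S = stayEv B b δ ↑F ∩ touchEv B b δ k ↑G := by
    intro δ
    ext ω
    simp only [Set.mem_preimage, hSdef, Set.mem_inter_iff, Set.mem_setOf_eq,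
      stayEv, touchEv, Finset.mem_coe]
    constructor
    · rintro ⟨h1, r, hr, h2⟩
      refine ⟨fun r' hr' => ?_, r, hr, ?_⟩
      · have := h1 r' hr'; rwa [vmap, if_pos hr'] at this
      · rwa [vmap, if_pos (hGF hr)] at h2
    · rintro ⟨h1, r, hr, h2⟩
      refine ⟨fun r' hr' => ?_, r, hr, ?_⟩
      · rw [vmap, if_pos hr']; exact h1 r' hr'
      · rw [vmap, if_pos (hGF hr)]; exact h2
  calc P (stayEv B b 0 ↑F ∩ touchEv B b 0 k ↑G)
      = (P.map (vmap B 0 F)) S := by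
        rw [Measure.map_apply (measurable_vmap hB.meas 0 F) hS, hpre 0]
    _ = ∫⁻ x in S, dens ε q x ∂(P.map (vmap B ε F)) := by
        rw [fd_claim hB ε F q hqF hFbd, withDensity_apply _ hS]
    _ ≤ ∫⁻ _x in S, ENNReal.ofReal (Real.exp (ε * b q + ε ^ 2 * q / 2))
          ∂(P.map (vmap B ε F)) := by
        apply setLIntegral_mono measurable_const
        intro x hx
        apply ENNReal.ofReal_le_ofReal
        apply Real.exp_le_exp.mpr
        have hxq : x q ≤ b q := hx.1 q hqF
        have := mul_le_mul_of_nonneg_left hxq hε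
        linarith
    _ = ENNReal.ofReal (Real.exp (ε * b q + ε ^ 2 * q / 2)) * (P.map (vmap B ε F)) S :=
        setLIntegral_const _ _
    _ = ENNReal.ofReal (Real.exp (ε * b q + ε ^ 2 * q / 2))
          * P (stayEv B b ε ↑F ∩ touchEv B b ε k ↑G) := by
        rw [Measure.map_apply (measurable_vmap hB.meas ε F) hS, hpre ε]

/-- The touching event for drift `0` is null. -/
lemma AEv_null {P : Measure Ω} {B : ℝ → Ω → ℝ} (hB : IsStandardBM P B) (b : ℝ → ℝ)
    (hmono : Monotone b) (hlc : ∀ t : ℝ, Tendsto b (nhdsWithin t (Iio t)) (nhds (b t)))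
    {h q : ℝ} (hh : 0 < h) (hhq : h ≤ q) (hq_rat : ∃ p : ℚ, (p : ℝ) = q) :
    P (AEv B b 0 h q) = 0 := by
  classical
  haveI := hB.isProb
  have hq_pos : 0 < q := hh.trans_le hhq
  -- pairwise disjointness in the drift parameter
  have hdisj : ∀ ε ε' : ℝ, ε < ε' → Disjoint (AEv B b ε h q) (AEv B b ε' h q) := by
    intro ε ε' hεε
    rw [Set.disjoint_left]
    rintro ω ⟨hst, htc⟩ ⟨_hst', htc'⟩
    simp only [Set.mem_iInter] at htc'
    exact path_disjoint (hB.cont ω) hmono hlc hh hhq hεε hst (fun k => htc' k)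
  -- there is a drift ε₀ ∈ (0,1) whose event is null
  obtain ⟨ε₀, hε₀mem, hε₀null⟩ :
      ∃ e : ℝ, e ∈ Set.Ioo (0:ℝ) 1 ∧ P (AEv B b e h q) = 0 := by
    by_contra hcon
    push_neg at hcon
    have hcnt : Set.Countable {e : ↥(Set.Ioo (0:ℝ) 1) | 0 < P (AEv B b (e : ℝ) h q)} :=
      Measure.countable_meas_pos_of_disjoint_iUnion
        (fun _e => measurableSet_AEv hB.meas b _ h q)
        (fun e e' hne => by
          rcases lt_or_gt_of_ne (fun hcc => hne (Subtype.coe_injective hcc)) with h1 | h1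
          · exact hdisj _ _ h1
          · exact (hdisj _ _ h1).symm)
    have huniv : {e : ↥(Set.Ioo (0:ℝ) 1) | 0 < P (AEv B b (e : ℝ) h q)} = Set.univ := by
      ext e
      simp only [Set.mem_setOf_eq, Set.mem_univ, iff_true]
      exact pos_iff_ne_zero.mpr (hcon (e : ℝ) e.2)
    rw [huniv, Set.countable_univ_iff] at hcnt
    have hcnt2 : (Set.Ioo (0:ℝ) 1).Countable := Set.countable_coe_iff.mp hcnt
    have := hcnt2.le_aleph0
    rw [Cardinal.mk_Ioo_real (show (0:ℝ) < 1 by norm_num)] at this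
    exact absurd this (not_le.mpr Cardinal.aleph0_lt_continuum)
  have hε₀pos : 0 ≤ ε₀ := hε₀mem.1.le
  set K : ℝ≥0∞ := ENNReal.ofReal (Real.exp (ε₀ * b q + ε₀ ^ 2 * q / 2)) with hKdef
  have hK0 : K ≠ 0 := by
    rw [hKdef]
    simp only [ne_eq, ENNReal.ofReal_eq_zero, not_le]
    exact Real.exp_pos _
  have hKtop : K ≠ ∞ := ENNReal.ofReal_ne_top
  -- the finite approximating sets
  set cst : ℕ → ℝ := fun i => (((Denumerable.eqv ℚ).symm i : ℚ) : ℝ) with hcstdef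
  set Fn : ℕ → Finset ℝ := fun n =>
    insert q (((Finset.range (n+1)).image cst).filter (fun x => 0 < x ∧ x ≤ q)) with hFndef
  set Gn : ℕ → Finset ℝ := fun n => (Fn n).filter (fun x => h ≤ x) with hGndef
  have hFn_bd : ∀ n, ∀ r ∈ Fn n, 0 < r ∧ r ≤ q := by
    intro n r hr
    rcases Finset.mem_insert.mp hr with rfl | hr'
    · exact ⟨hq_pos, le_rfl⟩
    · exact (Finset.mem_filter.mp hr').2
  have hqFn : ∀ n, q ∈ Fn n := fun n => Finset.mem_insert_self q _
  have hFn_rat : ∀ n, ∀ r ∈ Fn n, (r : ℝ) ∈ ratQ q := by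
    intro n r hr
    refine ⟨?_, (hFn_bd n r hr).1, (hFn_bd n r hr).2⟩
    rcases Finset.mem_insert.mp hr with rfl | hr'
    · exact hq_rat
    · obtain ⟨i, _, rfl⟩ := Finset.mem_image.mp (Finset.mem_filter.mp hr').1
      exact ⟨_, rfl⟩
  have hFn_mono : Monotone Fn := by
    intro n m hnm
    apply Finset.insert_subset_insert
    apply Finset.filter_subset_filter
    exact Finset.image_subset_image (Finset.range_subset_range.mpr (by omega))
  have hFn_cover : ∀ r ∈ ratQ q, ∃ n, r ∈ Fn n := by
    rintro r ⟨⟨p, rfl⟩, hr1, hr2⟩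
    refine ⟨(Denumerable.eqv ℚ) p, Finset.mem_insert_of_mem ?_⟩
    rw [Finset.mem_filter]
    refine ⟨Finset.mem_image.mpr ⟨(Denumerable.eqv ℚ) p, ?_, ?_⟩, hr1, hr2⟩
    · exact Finset.mem_range.mpr (by omega)
    · simp only [hcstdef, Equiv.symm_apply_apply]
  have hGn_rat : ∀ n, ∀ r ∈ Gn n, (r : ℝ) ∈ ratQ2 h q := by
    intro n r hr
    obtain ⟨hrF, hrh⟩ := Finset.mem_filter.mp hr
    exact ⟨(hFn_rat n r hrF).1, hrh, (hFn_bd n r hrF).2⟩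
  have hGn_subF : ∀ n m, n ≤ m → Gn n ⊆ Fn m :=
    fun n m hnm => (Finset.filter_subset _ _).trans (hFn_mono hnm)
  have hGn_mono : Monotone Gn :=
    fun n m hnm => Finset.filter_subset_filter _ (hFn_mono hnm)
  have hGn_cover : ∀ r ∈ ratQ2 h q, ∃ n, r ∈ Gn n := by
    rintro r ⟨hrat, hr1, hr2⟩
    obtain ⟨n, hn⟩ := hFn_cover r ⟨hrat, hh.trans_le hr1, hr2⟩
    exact ⟨n, Finset.mem_filter.mpr ⟨hn, hr1⟩⟩
  -- step 1 : finite touching sets, full stay set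
  have step1 : ∀ (k n : ℕ),
      P (stayEv B b 0 (ratQ q) ∩ touchEv B b 0 k ↑(Gn n))
        ≤ K * P (stayEv B b ε₀ (ratQ q) ∩ touchEv B b ε₀ k ↑(Gn n)) := by
    intro k n
    have hrep : ∀ δ : ℝ, stayEv B b δ (ratQ q) ∩ touchEv B b δ k ↑(Gn n)
        = ⋂ m : ℕ, (stayEv B b δ ↑(Fn (m + n)) ∩ touchEv B b δ k ↑(Gn n)) := by
      intro δ
      apply Set.Subset.antisymm
      · intro ω hω
        rw [Set.mem_iInter]
        intro m
        exact ⟨fun r hr => hω.1 r (hFn_rat _ r hr), hω.2⟩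
      · intro ω hω
        rw [Set.mem_iInter] at hω
        refine ⟨?_, (hω 0).2⟩
        intro r hr
        obtain ⟨n', hn'⟩ := hFn_cover r hr
        exact (hω n').1 r (hFn_mono (Nat.le_add_right n' n) hn')
    have hmeasI : ∀ (δ : ℝ) (m : ℕ),
        MeasurableSet (stayEv B b δ ↑(Fn (m + n)) ∩ touchEv B b δ k ↑(Gn n)) := fun δ m =>
      (measurableSet_stayEv hB.meas b δ (Fn (m + n)).countable_toSet).inter
        (measurableSet_touchEv hB.meas b δ k (Gn n).countable_toSet)
    have hanti : ∀ δ : ℝ,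
        Antitone (fun m => stayEv B b δ ↑(Fn (m + n)) ∩ touchEv B b δ k ↑(Gn n)) := by
      intro δ m m' hmm'
      exact Set.inter_subset_inter
        (stayEv_anti (Finset.coe_subset.mpr (hFn_mono (by omega)))) Set.Subset.rfl
    rw [hrep 0, hrep ε₀,
      Antitone.measure_iInter (hanti 0) (fun m => (hmeasI 0 m).nullMeasurableSet)
        ⟨0, measure_ne_top P _⟩,
      Antitone.measure_iInter (hanti ε₀) (fun m => (hmeasI ε₀ m).nullMeasurableSet)
        ⟨0, measure_ne_top P _⟩,
      ENNReal.mul_iInf_of_ne hK0 hKtop]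
    apply iInf_mono
    intro m
    exact fd_ineq hB b hε₀pos (Fn (m + n)) (Gn n) (hFn_bd (m + n)) (hqFn (m + n))
      (hGn_subF n (m + n) (Nat.le_add_left n m)) k
  -- step 2 : full touching sets
  have step2 : ∀ k : ℕ,
      P (stayEv B b 0 (ratQ q) ∩ touchEv B b 0 k (ratQ2 h q))
        ≤ K * P (stayEv B b ε₀ (ratQ q) ∩ touchEv B b ε₀ k (ratQ2 h q)) := by
    intro k
    have hrepU : stayEv B b 0 (ratQ q) ∩ touchEv B b 0 k (ratQ2 h q)
        = ⋃ n : ℕ, (stayEv B b 0 (ratQ q) ∩ touchEv B b 0 k ↑(Gn n)) := by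
      apply Set.Subset.antisymm
      · rintro ω ⟨h1, r, hr, h2⟩
        obtain ⟨n, hn⟩ := hGn_cover r hr
        exact Set.mem_iUnion.mpr ⟨n, h1, r, hn, h2⟩
      · rintro ω hω
        obtain ⟨n, h1, h2⟩ := Set.mem_iUnion.mp hω
        exact ⟨h1, touchEv_mono (fun r hr => hGn_rat n r hr) h2⟩
    have hmonoU : Monotone (fun n => stayEv B b 0 (ratQ q) ∩ touchEv B b 0 k ↑(Gn n)) :=
      fun n m hnm => Set.inter_subset_inter Set.Subset.rfl
        (touchEv_mono (Finset.coe_subset.mpr (hGn_mono hnm)))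
    rw [hrepU, Monotone.measure_iUnion hmonoU]
    apply iSup_le
    intro n
    refine (step1 k n).trans (mul_le_mul_right (measure_mono ?_) K)
    exact Set.inter_subset_inter Set.Subset.rfl (touchEv_mono (fun r hr => hGn_rat n r hr))
  -- step 3 : conclude
  have hArep : ∀ δ : ℝ, AEv B b δ h q
      = ⋂ k : ℕ, (stayEv B b δ (ratQ q) ∩ touchEv B b δ k (ratQ2 h q)) := by
    intro δ
    rw [AEv, Set.inter_iInter]
  have hmeasIk : ∀ (δ : ℝ) (k : ℕ),
      MeasurableSet (stayEv B b δ (ratQ q) ∩ touchEv B b δ k (ratQ2 h q)) := fun δ k =>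
    (measurableSet_stayEv hB.meas b δ (countable_ratQ q)).inter
      (measurableSet_touchEv hB.meas b δ k (countable_ratQ2 h q))
  have hantik : ∀ δ : ℝ,
      Antitone (fun k => stayEv B b δ (ratQ q) ∩ touchEv B b δ k (ratQ2 h q)) :=
    fun δ k k' hkk => Set.inter_subset_inter Set.Subset.rfl (touchEv_anti_k hkk)
  have hfinal : P (AEv B b 0 h q) ≤ K * P (AEv B b ε₀ h q) := by
    rw [hArep 0, hArep ε₀,
      Antitone.measure_iInter (hantik 0) (fun k => (hmeasIk 0 k).nullMeasurableSet)
        ⟨0, measure_ne_top P _⟩,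
      Antitone.measure_iInter (hantik ε₀) (fun k => (hmeasIk ε₀ k).nullMeasurableSet)
        ⟨0, measure_ne_top P _⟩,
      ENNReal.mul_iInf_of_ne hK0 hKtop]
    exact iInf_mono step2
  rw [hε₀null, mul_zero] at hfinal
  exact le_antisymm hfinal zero_le

end BMAux

open BMAux

/-- For a left-continuous increasing `b : ℝ → ℝ` and a standard Brownian
motion `B` started at `0`, `σ_b = inf{t>0 : B_t > b t}` equals `τ_b = inf{t>0 : B_t ≥ b t}` a.s. -/
theorem brownian_strict_hitting_eq_hitting
    (P : Measure Ω) (B : ℝ → Ω → ℝ) (hB : IsStandardBM P B)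
    (b : ℝ → ℝ) (hmono : Monotone b)
    (hlc : ∀ t : ℝ, Tendsto b (nhdsWithin t (Iio t)) (nhds (b t))) :
    ∀ᵐ ω ∂P, hitTime B (fun t x => b t < x) ω = hitTime B (fun t x => b t ≤ x) ω := by
  classical
  haveI := hB.isProb
  set N : Set Ω := ⋃ (p : ℚ × ℚ), ⋃ (_ : 0 < ((p.2 : ℝ)) ∧ (p.2 : ℝ) < (p.1 : ℝ)),
    AEv B b 0 (p.2 : ℝ) (p.1 : ℝ) with hNdef
  have hN : P N = 0 := by
    rw [hNdef]
    refine measure_iUnion_null fun p => measure_iUnion_null fun hp => ?_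
    exact AEv_null hB b hmono hlc hp.1 hp.2.le ⟨p.1, rfl⟩
  rw [MeasureTheory.ae_iff]
  apply measure_mono_null _ hN
  intro ω hω
  simp only [Set.mem_setOf_eq] at hω
  have hle : hitTime B (fun t x => b t ≤ x) ω ≤ hitTime B (fun t x => b t < x) ω := by
    apply sInf_le_sInf
    apply Set.image_mono
    intro t ht
    exact ⟨ht.1, ht.2.le⟩
  have hlt : hitTime B (fun t x => b t ≤ x) ω < hitTime B (fun t x => b t < x) ω :=
    lt_of_le_of_ne hle (fun hcc => hω hcc.symm)
  obtain ⟨Q, H, hH0, hHQ, hstay, htouch⟩ := path_touches (hB.cont ω) hmono hlt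
  rw [hNdef]
  apply Set.mem_iUnion.mpr
  refine ⟨(Q, H), ?_⟩
  apply Set.mem_iUnion.mpr
  refine ⟨⟨hH0, hHQ⟩, ?_⟩
  refine ⟨hstay, ?_⟩
  rw [Set.mem_iInter]
  exact fun k => htouch k
end
end

section
/- Let b : ℝ → ℝ be a left-continuous increasing function, and for ε > 0 define b^ε(t) = b(t + ε) + ε. Let B be a standard Brownian motion started at 0 and let τ_f = inf{t > 0 : B_t ≥ f(t)}. Then τ_{b^ε} decreases to τ_b almost surely as ε ↓ 0. -/
open MeasureTheory ProbabilityTheory Filter Set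
open scoped ENNReal NNReal

noncomputable section

variable {Ω : Type*} [MeasurableSpace Ω]

variable {Ω' : Type*} {mΩ' : MeasurableSpace Ω'}

theorem aux_indep_mono {m₁ m₂ m₁' m₂' : MeasurableSpace Ω'}
    {μ : @Measure Ω' mΩ'} (h : Indep m₁ m₂ μ) (h₁ : m₁' ≤ m₁) (h₂ : m₂' ≤ m₂) :
    Indep m₁' m₂' μ := by
  rw [Indep_iff] at h ⊢
  exact fun t1 t2 ht1 ht2 => h t1 t2 (h₁ _ ht1) (h₂ _ ht2)

theorem aux_indep_sup {μ : @Measure Ω' mΩ'} [IsZeroOrProbabilityMeasure μ]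
    {m₁ m₂ m₃ : MeasurableSpace Ω'}
    (h₁ : m₁ ≤ mΩ') (h₂ : m₂ ≤ mΩ') (h₃ : m₃ ≤ mΩ')
    (h12 : Indep m₂ (m₁ ⊔ m₃) μ) (h13 : Indep m₁ m₃ μ) : Indep (m₂ ⊔ m₁) m₃ μ := by
  set p1 : Set (Set Ω') :=
    {s | ∃ A, MeasurableSet[m₂] A ∧ ∃ C, MeasurableSet[m₁] C ∧ s = A ∩ C} with hp1def
  have hp1 : IsPiSystem p1 := by
    rintro s ⟨A, hA, C, hC, rfl⟩ t ⟨A', hA', C', hC', rfl⟩ -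
    exact ⟨A ∩ A', hA.inter hA', C ∩ C', hC.inter hC', by ext x; simp; tauto⟩
  have hp2 : IsPiSystem {s : Set Ω' | MeasurableSet[m₃] s} :=
    fun s hs t ht _ => MeasurableSet.inter hs ht
  have hgen1 : m₂ ⊔ m₁ = MeasurableSpace.generateFrom p1 := by
    refine le_antisymm (sup_le ?_ ?_) (MeasurableSpace.generateFrom_le ?_)
    · exact fun s hs => MeasurableSpace.measurableSet_generateFrom
        ⟨s, hs, univ, MeasurableSet.univ, (inter_univ s).symm⟩
    · exact fun s hs => MeasurableSpace.measurableSet_generateFrom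
        ⟨univ, MeasurableSet.univ, s, hs, (univ_inter s).symm⟩
    · rintro s ⟨A, hA, C, hC, rfl⟩
      exact MeasurableSet.inter (le_sup_left (a := m₂) (b := m₁) _ hA)
        (le_sup_right (a := m₂) (b := m₁) _ hC)
  have hgen2 : m₃ = MeasurableSpace.generateFrom {s : Set Ω' | MeasurableSet[m₃] s} :=
    (MeasurableSpace.generateFrom_measurableSet).symm
  refine ProbabilityTheory.IndepSets.indep (sup_le h₂ h₁) h₃ hp1 hp2 hgen1 hgen2 ?_
  rw [IndepSets_iff]
  rintro t1 t2 ⟨A, hA, C, hC, rfl⟩ ht2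
  rw [Indep_iff] at h12 h13
  have hCt : μ (C ∩ t2) = μ C * μ t2 := h13 C t2 hC ht2
  have hACt : μ (A ∩ (C ∩ t2)) = μ A * μ (C ∩ t2) :=
    h12 A (C ∩ t2) hA (MeasurableSet.inter (le_sup_left (a := m₁) (b := m₃) _ hC)
      (le_sup_right (a := m₁) (b := m₃) _ ht2))
  have hAC : μ (A ∩ C) = μ A * μ C := h12 A C hA (le_sup_left (a := m₁) (b := m₃) _ hC)
  calc μ (A ∩ C ∩ t2) = μ (A ∩ (C ∩ t2)) := by rw [inter_assoc]
    _ = μ A * (μ C * μ t2) := by rw [hACt, hCt]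
    _ = (μ A * μ C) * μ t2 := by ring
    _ = μ (A ∩ C) * μ t2 := by rw [hAC]

section BMaux

variable {P : Measure Ω} {B : ℝ → Ω → ℝ}

/-- The past σ-algebra up to time `s`. -/
def pastSA (B : ℝ → Ω → ℝ) (s : ℝ) : MeasurableSpace Ω :=
  ⨆ u ∈ Set.Icc (0:ℝ) s, MeasurableSpace.comap (B u) inferInstance

theorem pastSA_mono (B : ℝ → Ω → ℝ) {s s' : ℝ} (h : s ≤ s') : pastSA B s ≤ pastSA B s' :=
  biSup_mono fun _ hu => ⟨hu.1, hu.2.trans h⟩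

theorem pastSA_le (hB : IsStandardBM P B) (s : ℝ) :
    pastSA B s ≤ (inferInstance : MeasurableSpace Ω) := by
  refine iSup₂_le fun u _ => (hB.meas u).comap_le

theorem comap_sub_le_past (hB : IsStandardBM P B) {u v s : ℝ}
    (hu0 : 0 ≤ u) (hus : u ≤ s) (hv0 : 0 ≤ v) (hvs : v ≤ s) :
    MeasurableSpace.comap (fun ω => B u ω - B v ω) inferInstance ≤ pastSA B s := by
  refine Measurable.comap_le (Measurable.sub ?_ ?_)
  · exact (comap_measurable (B u)).mono
      (le_biSup (s := Set.Icc (0:ℝ) s)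
        (fun u => MeasurableSpace.comap (B u) inferInstance) ⟨hu0, hus⟩) le_rfl
  · exact (comap_measurable (B v)).mono
      (le_biSup (s := Set.Icc (0:ℝ) s)
        (fun u => MeasurableSpace.comap (B u) inferInstance) ⟨hv0, hvs⟩) le_rfl

theorem indep_finset_incr (hB : IsStandardBM P B) {q : ℝ} (hq : 0 ≤ q)
    {f : ℚ → ℝ} (hf : Monotone f) (hfq : ∀ r, q ≤ f r) (s : Finset ℚ) :
    Indep (s.sup fun r => MeasurableSpace.comap (fun ω => B (f r) ω - B q ω) inferInstance)
      (pastSA B q) P := by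
  haveI := hB.isProb
  classical
  induction s using Finset.induction_on_max with
  | empty =>
    rw [Finset.sup_empty]
    exact ProbabilityTheory.indep_bot_left _
  | insert a s ha IH =>
    rcases s.eq_empty_or_nonempty with rfl | hs
    · rw [Finset.sup_insert, Finset.sup_empty, sup_bot_eq]
      exact hB.indep q (f a) hq (hfq a)
    · set g : ℚ → MeasurableSpace Ω :=
        fun r => MeasurableSpace.comap (fun ω => B (f r) ω - B q ω) inferInstance with hg
      set tstar : ℝ := f (s.max' hs) with htstar
      have htq : q ≤ tstar := hfq _
      have ht0 : (0:ℝ) ≤ tstar := hq.trans htq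
      have hta : tstar ≤ f a := hf (ha _ (s.max'_mem hs)).le
      have hD : Indep (MeasurableSpace.comap (fun ω => B (f a) ω - B tstar ω) inferInstance)
          (pastSA B tstar) P := hB.indep tstar (f a) ht0 hta
      have hm₁ : (s.sup g) ≤ pastSA B tstar := by
        refine Finset.sup_le fun r hr => comap_sub_le_past hB (hq.trans (hfq r))
          (hf (s.le_max' r hr)) hq htq
      have h12 : Indep (MeasurableSpace.comap (fun ω => B (f a) ω - B tstar ω) inferInstance)
          ((s.sup g) ⊔ pastSA B q) P :=
        aux_indep_mono hD le_rfl (sup_le hm₁ (pastSA_mono B htq))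
      have hkey : Indep
          ((MeasurableSpace.comap (fun ω => B (f a) ω - B tstar ω) inferInstance) ⊔ s.sup g)
          (pastSA B q) P := by
        refine aux_indep_sup ?_ ?_ ?_ h12 IH
        · exact Finset.sup_le fun r _ => ((hB.meas (f r)).sub (hB.meas q)).comap_le
        · exact ((hB.meas (f a)).sub (hB.meas tstar)).comap_le
        · exact pastSA_le hB q
      rw [Finset.sup_insert]
      refine aux_indep_mono hkey (sup_le ?_ le_sup_right) le_rfl
      have hmeas : Measurable[(MeasurableSpace.comap (fun ω => B (f a) ω - B tstar ω)
          inferInstance) ⊔ s.sup g] (fun ω => B (f a) ω - B q ω) := by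
        have h1 : Measurable[(MeasurableSpace.comap (fun ω => B (f a) ω - B tstar ω)
            inferInstance) ⊔ s.sup g] (fun ω => B (f a) ω - B tstar ω) :=
          (comap_measurable _).mono le_sup_left le_rfl
        have h2 : Measurable[(MeasurableSpace.comap (fun ω => B (f a) ω - B tstar ω)
            inferInstance) ⊔ s.sup g] (fun ω => B tstar ω - B q ω) := by
          have hle : g (s.max' hs) ≤ (MeasurableSpace.comap
              (fun ω => B (f a) ω - B tstar ω) inferInstance) ⊔ s.sup g :=
            le_trans (Finset.le_sup (s.max'_mem hs)) le_sup_right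
          exact (comap_measurable _).mono hle le_rfl
        have h3 := h1.add h2
        have : (fun ω => (B (f a) ω - B tstar ω) + (B tstar ω - B q ω))
            = fun ω => B (f a) ω - B q ω := by funext ω; ring
        rw [← this]; exact h3
      exact hmeas.comap_le

end BMaux

section BMaux2

variable {P : Measure Ω} {B : ℝ → Ω → ℝ}

theorem indep_iSup_incr (hB : IsStandardBM P B) {q : ℝ} (hq : 0 ≤ q)
    {f : ℚ → ℝ} (hf : Monotone f) (hfq : ∀ r, q ≤ f r) :
    Indep (⨆ r : ℚ, MeasurableSpace.comap (fun ω => B (f r) ω - B q ω) inferInstance)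
      (pastSA B q) P := by
  haveI := hB.isProb
  classical
  set g : ℚ → MeasurableSpace Ω :=
    fun r => MeasurableSpace.comap (fun ω => B (f r) ω - B q ω) inferInstance with hg
  let e : ℚ ≃ ℕ := Denumerable.eqv ℚ
  set m : ℕ → MeasurableSpace Ω := fun n => ((Finset.range n).image e.symm).sup g with hm
  have hmono : Monotone m := fun i j hij =>
    Finset.sup_mono (Finset.image_subset_image (Finset.range_subset_range.2 hij))
  have h_indep : ∀ n, Indep (m n) (pastSA B q) P := fun n => indep_finset_incr hB hq hf hfq _
  have h_le : ∀ n, m n ≤ (inferInstance : MeasurableSpace Ω) := fun n =>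
    Finset.sup_le fun r _ => ((hB.meas (f r)).sub (hB.meas q)).comap_le
  have h := indep_iSup_of_monotone h_indep h_le (pastSA_le hB q) hmono
  have heq : (⨆ n, m n) = ⨆ r : ℚ, g r := by
    apply le_antisymm
    · exact iSup_le fun n => Finset.sup_le fun r _ => le_iSup g r
    · refine iSup_le fun r => le_iSup_of_le (e r + 1) ?_
      exact Finset.le_sup (Finset.mem_image.2
        ⟨e r, Finset.mem_range.2 (Nat.lt_succ_self _), Equiv.symm_apply_apply e r⟩)
  rwa [heq] at h

theorem null_touch (hB : IsStandardBM P B) (b : ℝ → ℝ) (hmono : Monotone b)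
    {q q' : ℝ} (hq : 0 < q) :
    P {ω | (⨆ r : ℚ, (B (max q (min q' (r:ℝ))) ω - b (max q (min q' (r:ℝ))))) = 0} = 0 := by
  haveI := hB.isProb
  set f : ℚ → ℝ := fun r => max q (min q' (r:ℝ)) with hf
  have hfm : Monotone f := fun r r' h =>
    max_le_max le_rfl (min_le_min le_rfl (by exact_mod_cast h))
  have hfq : ∀ r, q ≤ f r := fun r => le_max_left _ _
  have hfub : ∀ r, f r ≤ max q q' := fun r =>
    max_le (le_max_left q q') ((min_le_left _ _).trans (le_max_right _ _))
  set W : Ω → ℝ := fun ω => ⨆ r : ℚ, (B (f r) ω - B q ω - b (f r)) with hW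
  have hWmeas : Measurable W :=
    Measurable.iSup fun r => (((hB.meas (f r)).sub (hB.meas q)).sub measurable_const)
  have hbdd : ∀ ω, BddAbove (Set.range fun r : ℚ => B (f r) ω - B q ω - b (f r)) := by
    intro ω
    obtain ⟨C, hC⟩ := (isCompact_Icc (a := q) (b := max q q')).bddAbove_image
      ((hB.cont ω).continuousOn)
    refine ⟨C - B q ω - b q, ?_⟩
    rintro x ⟨r, rfl⟩
    have h1 : B (f r) ω ≤ C := hC ⟨f r, ⟨hfq r, hfub r⟩, rfl⟩
    have h2 : b q ≤ b (f r) := hmono (hfq r)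
    simp only []
    linarith
  have hsplit : ∀ ω, (⨆ r : ℚ, (B (f r) ω - b (f r))) = W ω + B q ω := by
    intro ω
    have hmap := Monotone.map_ciSup_of_continuousAt (f := fun x : ℝ => x + B q ω)
      (continuousAt_id.add continuousAt_const) (monotone_id.add_const _) (hbdd ω)
    have h2 : (fun r : ℚ => B (f r) ω - B q ω - b (f r) + B q ω)
        = fun r : ℚ => B (f r) ω - b (f r) := by funext r; ring
    rw [hW]
    simp only []
    rw [← h2]
    exact hmap.symm
  have hindep : IndepFun W (B q) P := by
    rw [IndepFun_iff_Indep]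
    have h := indep_iSup_incr hB hq.le hfm hfq
    refine aux_indep_mono h ?_ ?_
    · refine Measurable.comap_le (Measurable.iSup fun r => ?_)
      exact ((comap_measurable _).mono (le_iSup
        (fun r : ℚ => MeasurableSpace.comap (fun ω => B (f r) ω - B q ω) inferInstance) r)
        le_rfl).sub measurable_const
    · exact le_biSup (s := Set.Icc (0:ℝ) q)
        (fun u => MeasurableSpace.comap (B u) inferInstance) ⟨hq.le, le_rfl⟩
  have hlaw : P.map (B q) = gaussianReal 0 (Real.toNNReal q) := by
    have hg := hB.gauss 0 q le_rfl hq.le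
    have heq : (fun ω => B q ω - B 0 ω) = B q := by funext ω; rw [hB.init ω, sub_zero]
    rwa [heq, sub_zero] at hg
  have hpair : P.map (fun ω => (W ω, B q ω)) = (P.map W).prod (P.map (B q)) :=
    (indepFun_iff_map_prod_eq_prod_map_map hWmeas.aemeasurable
      (hB.meas q).aemeasurable).mp hindep
  have hsetm : MeasurableSet {p : ℝ × ℝ | p.1 + p.2 = 0} :=
    (measurable_fst.add measurable_snd) (measurableSet_singleton 0)
  have hset : {ω | (⨆ r : ℚ, (B (f r) ω - b (f r))) = 0}
      = (fun ω => (W ω, B q ω)) ⁻¹' {p : ℝ × ℝ | p.1 + p.2 = 0} := by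
    ext ω
    simp only [Set.mem_setOf_eq, Set.mem_preimage, hsplit ω]
  have hzero : ∀ w : ℝ,
      (gaussianReal 0 (Real.toNNReal q)) {x : ℝ | w + x = 0} = 0 := by
    intro w
    have hsing : {x : ℝ | w + x = 0} = {-w} := by
      ext x
      simp [eq_neg_iff_add_eq_zero, add_comm]
    rw [hsing]
    have hv : (Real.toNNReal q) ≠ 0 := by
      simp only [ne_eq, Real.toNNReal_eq_zero, not_le]
      linarith
    exact (gaussianReal_absolutelyContinuous _ hv) (measure_singleton _)
  calc P {ω | (⨆ r : ℚ, (B (f r) ω - b (f r))) = 0}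
      = P.map (fun ω => (W ω, B q ω)) {p : ℝ × ℝ | p.1 + p.2 = 0} := by
        rw [hset, Measure.map_apply (hWmeas.prodMk (hB.meas q)) hsetm]
    _ = ((P.map W).prod (gaussianReal 0 (Real.toNNReal q))) {p : ℝ × ℝ | p.1 + p.2 = 0} := by
        rw [hpair, hlaw]
    _ = ∫⁻ w, (gaussianReal 0 (Real.toNNReal q)) (Prod.mk w ⁻¹' {p : ℝ × ℝ | p.1 + p.2 = 0})
          ∂(P.map W) := Measure.prod_apply hsetm
    _ = 0 := by
        simp only [Set.preimage_setOf_eq]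
        simp [hzero]

end BMaux2

/-- For left-continuous increasing `b : ℝ → ℝ` and `b^ε(t) = b(t+ε) + ε`,
the hitting times `τ_{b^ε}` decrease to `τ_b` a.s. as `ε ↓ 0`. -/
theorem brownian_hitting_time_upper_approx
    (P : Measure Ω) (B : ℝ → Ω → ℝ) (hB : IsStandardBM P B)
    (b : ℝ → ℝ) (hmono : Monotone b)
    (hlc : ∀ t : ℝ, Tendsto b (nhdsWithin t (Iio t)) (nhds (b t))) :
    (∀ ε ε' : ℝ, 0 < ε → ε ≤ ε' → ∀ ω,
        hitTime B (fun t x => b (t + ε) + ε ≤ x) ω ≤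
          hitTime B (fun t x => b (t + ε') + ε' ≤ x) ω) ∧
    ∀ᵐ ω ∂P, Tendsto (fun ε : ℝ => hitTime B (fun t x => b (t + ε) + ε ≤ x) ω)
      (nhdsWithin 0 (Ioi 0)) (nhds (hitTime B (fun t x => b t ≤ x) ω)) := by
  classical
  haveI := hB.isProb
  have hmonoτ : ∀ ε ε' : ℝ, 0 < ε → ε ≤ ε' → ∀ ω,
      hitTime B (fun t x => b (t + ε) + ε ≤ x) ω ≤
        hitTime B (fun t x => b (t + ε') + ε' ≤ x) ω := by
    intro ε ε' hε hεε' ω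
    refine sInf_le_sInf (Set.image_mono ?_)
    rintro t ⟨ht0, ht⟩
    refine ⟨ht0, le_trans ?_ ht⟩
    have := hmono ((add_le_add_iff_left t).mpr hεε')
    linarith
  refine ⟨hmonoτ, ?_⟩
  have hge : ∀ (ε : ℝ), ε ∈ Ioi (0:ℝ) → ∀ ω,
      hitTime B (fun t x => b t ≤ x) ω ≤ hitTime B (fun t x => b (t + ε) + ε ≤ x) ω := by
    intro ε hε ω
    have hε0 : (0:ℝ) < ε := hε
    refine sInf_le_sInf (Set.image_mono ?_)
    rintro t ⟨ht0, ht⟩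
    refine ⟨ht0, le_trans ?_ ht⟩
    have := hmono (le_add_of_nonneg_right hε0.le : t ≤ t + ε)
    linarith
  have hae : ∀ᵐ ω ∂P, ∀ p : ℚ × ℚ, 0 < ((p.1:ℝ)) →
      ¬ ((⨆ r : ℚ, (B (max (p.1:ℝ) (min (p.2:ℝ) (r:ℝ))) ω
        - b (max (p.1:ℝ) (min (p.2:ℝ) (r:ℝ))))) = 0) := by
    rw [ae_all_iff]
    intro p
    by_cases hp : 0 < ((p.1:ℝ))
    · have h0 := null_touch hB b hmono (q' := (p.2:ℝ)) hp
      filter_upwards [measure_eq_zero_iff_ae_notMem.mp h0] with ω hω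
      exact fun _ => hω
    · exact Filter.Eventually.of_forall fun ω h => absurd h hp
  filter_upwards [hae] with ω hgood
  set τ := hitTime B (fun t x => b t ≤ x) ω with hτ
  have hkey : ∀ c : ℝ≥0∞, τ < c → ∃ ε₀ : ℝ, 0 < ε₀ ∧
      hitTime B (fun t x => b (t + ε₀) + ε₀ ≤ x) ω < c := by
    intro c hc
    by_cases hstrict : ∃ s : ℝ, 0 < s ∧ ENNReal.ofReal s < c ∧ b s < B s ω
    · obtain ⟨s, hs0, hsc, hsb⟩ := hstrict
      set cg := B s ω - b s with hcg
      have hcg0 : 0 < cg := by simp only [hcg]; linarith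
      obtain ⟨η, hη0, hη⟩ := Metric.continuousAt_iff.mp
        ((hB.cont ω).continuousAt (x := s)) (cg/2) (by linarith)
      set ε₀ : ℝ := min (min (η/2) (s/2)) (cg/4) with hε₀def
      have hε₀0 : 0 < ε₀ :=
        lt_min (lt_min (half_pos hη0) (half_pos hs0)) (by linarith)
      have hε₀η : ε₀ < η := lt_of_le_of_lt ((min_le_left _ _).trans (min_le_left _ _)) (by linarith)
      have hε₀s : ε₀ < s := lt_of_le_of_lt ((min_le_left _ _).trans (min_le_right _ _)) (by linarith)
      have hε₀c : ε₀ ≤ cg/4 := min_le_right _ _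
      have hBs : |B (s - ε₀) ω - B s ω| < cg/2 := by
        have hd : dist (s - ε₀) s < η := by
          rw [Real.dist_eq]
          rw [abs_of_nonpos (by linarith)]
          simp only [neg_sub]
          linarith
        have := hη hd
        rwa [Real.dist_eq] at this
      have hcond : b ((s - ε₀) + ε₀) + ε₀ ≤ B (s - ε₀) ω := by
        rw [sub_add_cancel]
        have h1 : B (s - ε₀) ω - B s ω > -(cg/2) := neg_lt_of_abs_lt hBs
        simp only [hcg] at h1 ⊢
        linarith
      have hmem : ENNReal.ofReal (s - ε₀) ∈
          ENNReal.ofReal '' {t : ℝ | 0 < t ∧ b (t + ε₀) + ε₀ ≤ B t ω} :=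
        ⟨s - ε₀, ⟨by linarith, hcond⟩, rfl⟩
      refine ⟨ε₀, hε₀0, lt_of_le_of_lt (sInf_le hmem) ?_⟩
      exact lt_of_le_of_lt (ENNReal.ofReal_le_ofReal (by linarith)) hsc
    · exfalso
      push_neg at hstrict
      obtain ⟨x, hx, hxc⟩ := sInf_lt_iff.mp hc
      obtain ⟨t, ⟨ht0, htb⟩, rfl⟩ := hx
      have hbt : B t ω ≤ b t := hstrict t ht0 hxc
      have htouch : B t ω = b t := le_antisymm hbt htb
      obtain ⟨q, hq0, hqt⟩ := exists_rat_btwn ht0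
      obtain ⟨q', hq't, hq'c⟩ : ∃ q' : ℚ, t < (q':ℝ) ∧ ENNReal.ofReal (q':ℝ) < c := by
        rcases eq_or_ne c ⊤ with rfl | hctop
        · obtain ⟨q', hq'⟩ := exists_rat_gt t
          exact ⟨q', hq', ENNReal.ofReal_lt_top⟩
        · have htc : t < c.toReal := by
            rw [← ENNReal.ofReal_toReal hctop] at hxc
            exact (ENNReal.ofReal_lt_ofReal_iff_of_nonneg ht0.le).mp hxc
          obtain ⟨q', h1, h2⟩ := exists_rat_btwn htc
          refine ⟨q', h1, ?_⟩
          rw [← ENNReal.ofReal_toReal hctop]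
          exact (ENNReal.ofReal_lt_ofReal_iff_of_nonneg (ht0.le.trans h1.le)).mpr h2
      refine hgood (q, q') hq0 ?_
      set pr : ℚ → ℝ := fun r => max ((q:ℝ)) (min ((q':ℝ)) (r:ℝ)) with hprdef
      have hqq' : (q:ℝ) ≤ (q':ℝ) := le_of_lt (hqt.trans hq't)
      have hpr0 : ∀ r, 0 < pr r := fun r => lt_of_lt_of_le hq0 (le_max_left _ _)
      have hprub : ∀ r, pr r ≤ (q':ℝ) := fun r =>
        max_le hqq' (min_le_left _ _)
      have hbdd2 : BddAbove (Set.range fun r : ℚ => B (pr r) ω - b (pr r)) := by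
        obtain ⟨C, hC⟩ := (isCompact_Icc (a := (q:ℝ)) (b := (q':ℝ))).bddAbove_image
          ((hB.cont ω).continuousOn)
        refine ⟨C - b (q:ℝ), ?_⟩
        rintro x ⟨r, rfl⟩
        have h1 : B (pr r) ω ≤ C := hC ⟨pr r, ⟨le_max_left _ _, hprub r⟩, rfl⟩
        have h2 : b (q:ℝ) ≤ b (pr r) := hmono (le_max_left _ _)
        simp only []
        linarith
      refine le_antisymm (ciSup_le fun r => ?_) ?_
      · have h2 : ENNReal.ofReal (pr r) < c :=
          lt_of_le_of_lt (ENNReal.ofReal_le_ofReal (hprub r)) hq'c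
        have := hstrict (pr r) (hpr0 r) h2
        linarith
      · by_cases hrat : ∃ r : ℚ, (r:ℝ) = t
        · obtain ⟨r, hr⟩ := hrat
          have hpr : pr r = t := by
            rw [hprdef]
            simp only [hr]
            rw [min_eq_right (le_of_lt hq't), max_eq_right (le_of_lt hqt)]
          have hle := le_ciSup hbdd2 r
          rw [hpr] at hle
          rw [htouch, sub_self] at hle
          exact hle
        · push_neg at hrat
          have hseq : ∀ n : ℕ, ∃ r : ℚ, max ((q:ℝ)) (t - 1/(n+1)) < (r:ℝ) ∧ (r:ℝ) < t := by
            intro n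
            refine exists_rat_btwn (max_lt hqt ?_)
            have : (0:ℝ) < 1/(n+1) := by positivity
            linarith
          choose sn hsn1 hsn2 using hseq
          have hsnq : ∀ n, (q:ℝ) ≤ ((sn n : ℚ):ℝ) := fun n =>
            ((le_max_left _ _).trans (hsn1 n).le)
          have hsnq' : ∀ n, (((sn n : ℚ)):ℝ) ≤ (q':ℝ) := fun n =>
            ((hsn2 n).le.trans hq't.le)
          have hpr : ∀ n, pr (sn n) = ((sn n : ℚ):ℝ) := by
            intro n
            rw [hprdef]
            simp only []
            rw [min_eq_right (hsnq' n), max_eq_right (hsnq n)]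
          have hlow : ∀ n : ℕ, t - 1/(n+1) ≤ ((sn n : ℚ):ℝ) := fun n =>
            ((le_max_right _ _).trans (hsn1 n).le)
          have htlow : Tendsto (fun n : ℕ => t - 1/((n:ℝ)+1)) atTop (nhds t) := by
            have h0 : Tendsto (fun n : ℕ => 1/((n:ℝ)+1)) atTop (nhds 0) :=
              tendsto_one_div_add_atTop_nhds_zero_nat
            have := (tendsto_const_nhds (x := t) (f := atTop (α := ℕ))).sub h0
            simpa using this
          have htend : Tendsto (fun n : ℕ => ((sn n : ℚ):ℝ)) atTop (nhds t) :=
            tendsto_of_tendsto_of_tendsto_of_le_of_le htlow tendsto_const_nhds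
              (fun n => hlow n) (fun n => (hsn2 n).le)
          have htendb : Tendsto (fun n => b ((sn n : ℚ):ℝ)) atTop (nhds (b t)) := by
            refine (hlc t).comp ?_
            exact tendsto_nhdsWithin_iff.mpr
              ⟨htend, Filter.Eventually.of_forall fun n => hsn2 n⟩
          have htendB : Tendsto (fun n => B ((sn n : ℚ):ℝ) ω) atTop (nhds (B t ω)) :=
            ((hB.cont ω).tendsto t).comp htend
          have hlim : Tendsto (fun n => B ((sn n : ℚ):ℝ) ω - b ((sn n : ℚ):ℝ))
              atTop (nhds 0) := by
            have := htendB.sub htendb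
            rwa [htouch, sub_self] at this
          refine le_of_tendsto hlim (Filter.Eventually.of_forall fun n => ?_)
          have hle := le_ciSup hbdd2 (sn n)
          rwa [hpr n] at hle
  refine tendsto_order.2 ⟨fun a ha => ?_, fun a ha => ?_⟩
  · exact Filter.eventually_of_mem self_mem_nhdsWithin
      fun ε hε => lt_of_lt_of_le ha (hge ε hε ω)
  · obtain ⟨ε₀, hε₀0, hε₀⟩ := hkey a ha
    refine Filter.eventually_of_mem (Ioc_mem_nhdsGT hε₀0) fun ε hε => ?_
    exact lt_of_le_of_lt (hmonoτ ε ε₀ hε.1 hε.2 ω) hε₀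
end
end

section
/- Let B be a standard Brownian motion started at 0, b : (0,∞) → ℝ a left-continuous increasing function, and δ > 0. Define τ_b^δ = inf{t > δ : B_t ≥ b(t)} and, for ε > 0, τ_{b+ε}^δ = inf{t > δ : B_t ≥ b(t) + ε}. Then for every t > 0, P(lim_{ε↓0} τ_{b+ε}^δ > t) ≤ P(τ_b^δ > t). -/
open MeasureTheory ProbabilityTheory Filter Set
open scoped ENNReal NNReal

noncomputable section

variable {Ω : Type*} [MeasurableSpace Ω]

/-- First entry time after time `δ` of the path into the region described by `p`. -/
def hitTimeAfter (B : ℝ → Ω → ℝ) (δ : ℝ) (p : ℝ → ℝ → Prop) (ω : Ω) : ℝ≥0∞ :=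
  sInf (ENNReal.ofReal '' {t : ℝ | δ < t ∧ p t (B t ω)})

lemma indep_sup_aux {Ω : Type*} {mΩ : MeasurableSpace Ω} {μ : Measure Ω}
    [IsProbabilityMeasure μ] {m₁ m₂ m₃ : MeasurableSpace Ω}
    (h1 : m₁ ≤ mΩ) (h2 : m₂ ≤ mΩ) (h3 : m₃ ≤ mΩ)
    (h12 : Indep m₁ m₂ μ) (h312 : Indep m₃ (m₁ ⊔ m₂) μ) :
    Indep m₁ (m₂ ⊔ m₃) μ := by
  set p2 : Set (Set Ω) := {s | ∃ s₂, MeasurableSet[m₂] s₂ ∧ ∃ s₃, MeasurableSet[m₃] s₃ ∧ s = s₂ ∩ s₃}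
    with hp2def
  have hgen : m₂ ⊔ m₃ = MeasurableSpace.generateFrom p2 := by
    refine le_antisymm (sup_le ?_ ?_) (MeasurableSpace.generateFrom_le ?_)
    · intro s hs
      exact MeasurableSpace.measurableSet_generateFrom
        ⟨s, hs, Set.univ, MeasurableSet.univ, (Set.inter_univ s).symm⟩
    · intro s hs
      exact MeasurableSpace.measurableSet_generateFrom
        ⟨Set.univ, MeasurableSet.univ, s, hs, (Set.univ_inter s).symm⟩
    · rintro s ⟨s₂, hs₂, s₃, hs₃, rfl⟩
      exact ((le_sup_left : m₂ ≤ m₂ ⊔ m₃) _ hs₂).inter ((le_sup_right : m₃ ≤ m₂ ⊔ m₃) _ hs₃)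
  have hpi2 : IsPiSystem p2 := by
    rintro s ⟨a, ha, c, hc, rfl⟩ u ⟨a', ha', c', hc', rfl⟩ _
    exact ⟨a ∩ a', ha.inter ha', c ∩ c', hc.inter hc', by ext x; simp; tauto⟩
  have h12' := (Indep_iff _ _ _).mp h12
  have h312' := (Indep_iff _ _ _).mp h312
  refine IndepSets.indep h1 (hgen ▸ (sup_le h2 h3)) (@MeasurableSpace.isPiSystem_measurableSet Ω m₁) hpi2
    (@MeasurableSpace.generateFrom_measurableSet Ω m₁).symm hgen ?_
  rw [IndepSets_iff]
  rintro t1 t2 ht1 ⟨s₂, hs₂, s₃, hs₃, rfl⟩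
  have hm12 : MeasurableSet[m₁ ⊔ m₂] (t1 ∩ s₂) :=
    ((le_sup_left : m₁ ≤ m₁ ⊔ m₂) _ ht1).inter ((le_sup_right : m₂ ≤ m₁ ⊔ m₂) _ hs₂)
  have e1 : t1 ∩ (s₂ ∩ s₃) = s₃ ∩ (t1 ∩ s₂) := by ext x; simp; tauto
  have e2 : s₂ ∩ s₃ = s₃ ∩ s₂ := Set.inter_comm _ _
  rw [e1, h312' _ _ hs₃ hm12, h12' _ _ ht1 hs₂, e2,
    h312' _ _ hs₃ ((le_sup_right : m₂ ≤ m₁ ⊔ m₂) _ hs₂)]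
  ring



def Fpast (B : ℝ → Ω → ℝ) (s : ℝ) : MeasurableSpace Ω :=
  ⨆ u ∈ Set.Icc (0:ℝ) s, MeasurableSpace.comap (B u) inferInstance

lemma Fpast_le_ambient {P : Measure Ω} {B : ℝ → Ω → ℝ} (hB : IsStandardBM P B) (s : ℝ) :
    Fpast B s ≤ ‹MeasurableSpace Ω› :=
  iSup₂_le fun u _ => (hB.meas u).comap_le

lemma measB_Fpast {B : ℝ → Ω → ℝ} {u v : ℝ} (h : u ∈ Set.Icc (0:ℝ) v) :
    Measurable[Fpast B v] (B u) :=
  measurable_iff_comap_le.mpr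
    (le_biSup (fun u => MeasurableSpace.comap (B u) inferInstance) h)

lemma Fpast_mono {B : ℝ → Ω → ℝ} {s v : ℝ} (h : s ≤ v) : Fpast B s ≤ Fpast B v :=
  iSup₂_le fun u hu =>
    le_biSup (fun u => MeasurableSpace.comap (B u) inferInstance)
      (Set.Icc_subset_Icc_right h hu)

/-- join of increment σ-algebras over a finite (or arbitrary) set of times -/
def incrJoin (B : ℝ → Ω → ℝ) (δ : ℝ) (s : Set ℝ) : MeasurableSpace Ω :=
  ⨆ r ∈ s, MeasurableSpace.comap (fun ω => B r ω - B δ ω) inferInstance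

lemma incr_le_incrJoin {B : ℝ → Ω → ℝ} {δ r : ℝ} {s : Set ℝ} (h : r ∈ s) :
    MeasurableSpace.comap (fun ω => B r ω - B δ ω) inferInstance ≤ incrJoin B δ s :=
  le_biSup (fun r => MeasurableSpace.comap (fun ω => B r ω - B δ ω) inferInstance) h

lemma incr_le_Fpast {P : Measure Ω} {B : ℝ → Ω → ℝ} (hB : IsStandardBM P B) {r δ v : ℝ}
    (hr : r ∈ Set.Icc (0:ℝ) v) (hδ : δ ∈ Set.Icc (0:ℝ) v) :
    MeasurableSpace.comap (fun ω => B r ω - B δ ω) inferInstance ≤ Fpast B v :=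
  measurable_iff_comap_le.mp ((measB_Fpast hr).sub (measB_Fpast hδ))

lemma indep_incr_finset {P : Measure Ω} {B : ℝ → Ω → ℝ} (hB : IsStandardBM P B)
    {δ : ℝ} (hδ : 0 ≤ δ) (T : Finset ℝ) (hT : ∀ r ∈ T, δ < r) :
    Indep (Fpast B δ)
      (⨆ r ∈ T, MeasurableSpace.comap (fun ω => B r ω - B δ ω) inferInstance) P := by
  classical
  haveI := hB.isProb
  induction T using Finset.induction_on_max with
  | empty => simp only [Finset.notMem_empty, iSup_false, iSup_bot]; exact indep_bot_right _
  | insert a s hmax ih =>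
    have hδa : δ < a := hT a (s.mem_insert_self a)
    set r' : ℝ := if hs : s.Nonempty then s.max' hs else δ with hr'def
    have hr'mem : ∀ x ∈ s, x ≤ r' := by
      intro x hx
      rw [hr'def]
      rw [dif_pos ⟨x, hx⟩]
      exact Finset.le_max' _ _ hx
    have hδr' : δ ≤ r' := by
      rw [hr'def]
      split
      · rename_i hs
        exact (hT _ (Finset.mem_insert_of_mem (s.max'_mem hs))).le
      · exact le_rfl
    have hr'a : r' ≤ a := by
      rw [hr'def]
      split
      · rename_i hs
        exact (hmax _ (s.max'_mem hs)).le
      · exact hδa.le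
    have hJ_le : incrJoin B δ (↑s) ≤ Fpast B r' := by
      refine iSup₂_le fun r hrs => incr_le_Fpast hB ?_ ?_
      · exact ⟨(hδ.trans (hT _ (Finset.mem_insert_of_mem (by exact_mod_cast hrs))).le),
          hr'mem r (by exact_mod_cast hrs)⟩
      · exact ⟨hδ, hδr'⟩
    have hJ_amb : incrJoin B δ (↑s) ≤ ‹MeasurableSpace Ω› := hJ_le.trans (Fpast_le_ambient hB r')
    have h12 : Indep (Fpast B δ) (incrJoin B δ (↑s)) P := ih fun r hr => hT r (Finset.mem_insert_of_mem hr)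
    have h3 : Indep (MeasurableSpace.comap (fun ω => B a ω - B r' ω) inferInstance)
        (Fpast B δ ⊔ incrJoin B δ (↑s)) P := by
      refine indep_of_indep_of_le_right (hB.indep r' a (hδ.trans hδr') hr'a) ?_
      exact sup_le (Fpast_mono hδr') hJ_le
    have hcomb : Indep (Fpast B δ)
        (incrJoin B δ (↑s) ⊔ MeasurableSpace.comap (fun ω => B a ω - B r' ω) inferInstance) P :=
      indep_sup_aux (Fpast_le_ambient hB δ) hJ_amb
        (measurable_iff_comap_le.mp ((hB.meas a).sub (hB.meas r'))) h12 h3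
    have hle : (⨆ r ∈ insert a s, MeasurableSpace.comap (fun ω => B r ω - B δ ω) inferInstance)
        ≤ incrJoin B δ (↑s) ⊔ MeasurableSpace.comap (fun ω => B a ω - B r' ω) inferInstance := by
      rw [Finset.iSup_insert]
      refine sup_le ?_ le_sup_left
      refine measurable_iff_comap_le.mp ?_
      have heq : (fun ω => B a ω - B δ ω)
          = fun ω => (B a ω - B r' ω) + (B r' ω - B δ ω) := by funext ω; ring
      rw [heq]
      refine Measurable.add ?_ ?_
      · exact Measurable.mono (measurable_iff_comap_le.mpr le_rfl) le_sup_right le_rfl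
      · by_cases hs : s.Nonempty
        · have hr's : r' ∈ s := by rw [hr'def, dif_pos hs]; exact s.max'_mem hs
          have hc : MeasurableSpace.comap (fun ω => B r' ω - B δ ω) inferInstance
              ≤ incrJoin B δ (↑s) := incr_le_incrJoin (by exact_mod_cast hr's)
          exact Measurable.mono (measurable_iff_comap_le.mpr le_rfl) (hc.trans le_sup_left) le_rfl
        · have hrd : r' = δ := by rw [hr'def, dif_neg hs]
          rw [hrd]
          have : (fun ω => B δ ω - B δ ω) = fun _ : Ω => (0:ℝ) := by funext ω; ring
          rw [this]
          exact measurable_const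
    exact indep_of_indep_of_le_right hcomb hle

lemma indep_incr_countable {P : Measure Ω} {B : ℝ → Ω → ℝ} (hB : IsStandardBM P B)
    {δ : ℝ} (hδ : 0 ≤ δ) (e : ℕ → ℝ) (he : ∀ n, δ < e n) :
    Indep (Fpast B δ)
      (⨆ n : ℕ, MeasurableSpace.comap (fun ω => B (e n) ω - B δ ω) inferInstance) P := by
  classical
  haveI := hB.isProb
  set m : ℕ → MeasurableSpace Ω := fun n =>
    ⨆ r ∈ (Finset.range (n+1)).image e,
      MeasurableSpace.comap (fun ω => B r ω - B δ ω) inferInstance with hm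
  have hmono : Monotone m := by
    intro i j hij
    refine iSup₂_le fun r hr => ?_
    exact le_biSup (fun r => MeasurableSpace.comap (fun ω => B r ω - B δ ω) inferInstance) (Finset.image_subset_image (Finset.range_subset_range.mpr (Nat.succ_le_succ hij)) hr)
  have h_le : ∀ n, m n ≤ ‹MeasurableSpace Ω› := fun n =>
    iSup₂_le fun r _ => ((hB.meas r).sub (hB.meas δ)).comap_le
  have h_indep : ∀ n, Indep (m n) (Fpast B δ) P := by
    intro n
    refine (indep_incr_finset hB hδ _ fun r hr => ?_).symm
    obtain ⟨k, -, rfl⟩ := Finset.mem_image.mp hr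
    exact he k
  have h := indep_iSup_of_monotone h_indep h_le (Fpast_le_ambient hB δ) hmono
  refine indep_of_indep_of_le_right h.symm (iSup_le fun n => ?_)
  exact le_trans
    (le_biSup (fun r => MeasurableSpace.comap (fun ω => B r ω - B δ ω) inferInstance)
      (Finset.mem_image_of_mem e (Finset.self_mem_range_succ n)))
    (le_iSup m n)

/-- For the truncated hitting times `τ_b^δ = inf{t > δ : B_t ≥ b t}` and
`τ_{b+ε}^δ = inf{t > δ : B_t ≥ b t + ε}`, one has
`P(lim_{ε↓0} τ_{b+ε}^δ > t) ≤ P(τ_b^δ > t)` for every `t > 0`. -/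
theorem brownian_truncated_hitting_limit_bound
    (P : Measure Ω) (B : ℝ → Ω → ℝ) (hB : IsStandardBM P B)
    (b : ℝ → ℝ) (hmono : MonotoneOn b (Ioi 0))
    (hlc : ∀ t > (0:ℝ), Tendsto b (nhdsWithin t (Iio t)) (nhds (b t)))
    (δ : ℝ) (hδ : 0 < δ) (t : ℝ) (ht : 0 < t) :
    P {ω | ENNReal.ofReal t <
        ⨅ ε : {ε : ℝ // 0 < ε}, hitTimeAfter B δ (fun s x => b s + ↑ε ≤ x) ω} ≤
      P {ω | ENNReal.ofReal t < hitTimeAfter B δ (fun s x => b s ≤ x) ω} := by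
  classical
  haveI := hB.isProb
  by_cases hδt : t < δ
  · refine measure_mono fun ω _ => ?_
    show ENNReal.ofReal t < hitTimeAfter B δ (fun s x => b s ≤ x) ω
    refine lt_of_lt_of_le ((ENNReal.ofReal_lt_ofReal_iff hδ).mpr hδt) (le_sInf ?_)
    rintro x ⟨s, ⟨hs, -⟩, rfl⟩
    exact ENNReal.ofReal_le_ofReal hs.le
  push_neg at hδt
  set L : ℝ := sInf (b '' Set.Ioi δ) with hLdef
  set W : Ω → EReal := fun ω =>
    ⨆ q : {q : ℚ // δ < (q:ℝ) ∧ (q:ℝ) ≤ t},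
      ((B ((q:ℚ):ℝ) ω - B δ ω - b ((q:ℚ):ℝ) : ℝ) : EReal) with hWdef
  set Z₁ : Set Ω := {ω | B δ ω = L} with hZ₁def
  set Z₂ : Set Ω := {ω | ((-(B δ ω) : ℝ) : EReal) = W ω} with hZ₂def
  have hbddL : BddBelow (b '' Set.Ioi δ) := by
    refine ⟨b δ, ?_⟩
    rintro y ⟨u, hu, rfl⟩
    exact hmono (Set.mem_Ioi.mpr hδ) (Set.mem_Ioi.mpr (hδ.trans hu)) (le_of_lt hu)
  have hLneS : (b '' Set.Ioi δ).Nonempty :=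
    ⟨b (δ+1), ⟨δ+1, Set.mem_Ioi.mpr (by linarith), rfl⟩⟩
  -- the key pointwise inclusion
  have hsub : {ω | ENNReal.ofReal t <
        ⨅ ε : {ε : ℝ // 0 < ε}, hitTimeAfter B δ (fun s x => b s + ↑ε ≤ x) ω}
      ⊆ {ω | ENNReal.ofReal t < hitTimeAfter B δ (fun s x => b s ≤ x) ω} ∪ (Z₁ ∪ Z₂) := by
    intro ω hω
    simp only [Set.mem_setOf_eq] at hω
    by_cases hR : ENNReal.ofReal t < hitTimeAfter B δ (fun s x => b s ≤ x) ω
    · exact Or.inl hR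
    push_neg at hR
    right
    -- Step A : windows
    have window : ∀ ε : ℝ, 0 < ε → ∃ r, t < r ∧ ∀ s, δ < s → s < r → B s ω < b s + ε := by
      intro ε hε
      have h1 : ENNReal.ofReal t < hitTimeAfter B δ (fun s x => b s + ε ≤ x) ω :=
        lt_of_lt_of_le hω (iInf_le (fun ε' : {ε : ℝ // 0 < ε} => hitTimeAfter B δ (fun s x => b s + ↑ε' ≤ x) ω) ⟨ε, hε⟩)
      obtain ⟨r, -, hr1, hr2⟩ := ENNReal.lt_iff_exists_real_btwn.mp h1
      refine ⟨r, (ENNReal.ofReal_lt_ofReal_iff_of_nonneg ht.le).mp hr1, ?_⟩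
      intro s hs1 hs2
      by_contra hc
      push_neg at hc
      have hmem : ENNReal.ofReal s ∈
          ENNReal.ofReal '' {u : ℝ | δ < u ∧ b u + ε ≤ B u ω} := ⟨s, ⟨hs1, hc⟩, rfl⟩
      have h3 : hitTimeAfter B δ (fun s x => b s + ε ≤ x) ω ≤ ENNReal.ofReal s := sInf_le hmem
      have h4 : ENNReal.ofReal s < ENNReal.ofReal r :=
        (ENNReal.ofReal_lt_ofReal_iff_of_nonneg (hδ.trans hs1).le).mpr hs2
      exact absurd (lt_of_le_of_lt (hr2.le.trans h3) h4) (lt_irrefl _)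
    -- Step B : below the boundary on (δ, t]
    have hle : ∀ s, δ < s → s ≤ t → B s ω ≤ b s := by
      intro s h1 h2
      refine le_of_forall_sub_le fun ε hε => ?_
      obtain ⟨r, hr, h⟩ := window ε hε
      have := h s h1 (lt_of_le_of_lt h2 hr)
      linarith
    -- Step C : B δ ≤ L
    have hBδL : B δ ω ≤ L := by
      refine le_of_forall_sub_le fun ε hε => ?_
      obtain ⟨r, hr, h⟩ := window ε hε
      have hδr : δ < r := lt_of_le_of_lt hδt hr
      have key : ∀ u, δ < u → u < r → B δ ω ≤ b u + ε := by
        intro u hu1 hu2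
        have htend : Tendsto (fun s => B s ω) (nhdsWithin δ (Set.Ioi δ)) (nhds (B δ ω)) :=
          ((hB.cont ω).tendsto δ).mono_left nhdsWithin_le_nhds
        refine le_of_tendsto htend ?_
        filter_upwards [Ioo_mem_nhdsGT_of_mem (Set.mem_Ico.mpr ⟨le_rfl, hu1⟩)] with s hs
        have h5 : b s ≤ b u := hmono (Set.mem_Ioi.mpr (hδ.trans hs.1))
          (Set.mem_Ioi.mpr (hδ.trans hu1)) hs.2.le
        have := h s hs.1 (hs.2.trans hu2)
        linarith
      have hlow : B δ ω - ε ≤ L := by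
        refine le_csInf hLneS ?_
        rintro y ⟨u, hu, rfl⟩
        have hu' : δ < u := hu
        set u' := min u ((δ+r)/2) with hu'def
        have h1 : δ < u' := lt_min hu' (by linarith)
        have h2 : u' < r := lt_of_le_of_lt (min_le_right _ _) (by linarith)
        have h3 := key u' h1 h2
        have h4 : b u' ≤ b u := hmono (Set.mem_Ioi.mpr (hδ.trans h1))
          (Set.mem_Ioi.mpr (hδ.trans hu')) (min_le_left _ _)
        linarith
      linarith
    -- Step D : touching sequence
    have hseq : ∀ n : ℕ, ∃ s, δ < s ∧ s < t + 1/(n+1) ∧ b s ≤ B s ω := by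
      intro n
      have hpos : (0:ℝ) < 1/(n+1) := by positivity
      have h1 : hitTimeAfter B δ (fun s x => b s ≤ x) ω < ENNReal.ofReal (t + 1/(n+1)) :=
        lt_of_le_of_lt hR ((ENNReal.ofReal_lt_ofReal_iff_of_nonneg ht.le).mpr (by linarith))
      obtain ⟨x, hx, hlt⟩ := sInf_lt_iff.mp h1
      obtain ⟨s, ⟨h2, h3⟩, rfl⟩ := hx
      exact ⟨s, h2, (ENNReal.ofReal_lt_ofReal_iff_of_nonneg (hδ.trans h2).le).mp hlt, h3⟩
    choose sq hsq1 hsq2 hsq3 using hseq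
    have hmem : ∀ n, sq n ∈ Set.Icc δ (t+1) := by
      intro n
      refine ⟨(hsq1 n).le, (hsq2 n).le.trans ?_⟩
      have : 1/((n:ℝ)+1) ≤ 1 := by
        rw [div_le_one (by positivity)]
        linarith [Nat.cast_nonneg (α := ℝ) n]
      linarith
    obtain ⟨sS, hsSmem, φ, hφ, hconv⟩ := isCompact_Icc.tendsto_subseq hmem
    have hsSt : sS ≤ t := by
      have htends : Tendsto (fun k : ℕ => t + 1/((φ k : ℝ)+1)) atTop (nhds (t + 0)) := by
        refine Tendsto.const_add _ ?_
        have h0 : Tendsto (fun k : ℕ => 1/((k:ℝ)+1)) atTop (nhds 0) :=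
          tendsto_one_div_add_atTop_nhds_zero_nat
        exact h0.comp hφ.tendsto_atTop
      rw [add_zero] at htends
      exact le_of_tendsto_of_tendsto' hconv htends fun k => (hsq2 (φ k)).le
    have hBlim : Tendsto (fun k => B (sq (φ k)) ω) atTop (nhds (B sS ω)) :=
      ((hB.cont ω).tendsto sS).comp hconv
    rcases eq_or_lt_of_le hsSmem.1 with heq | hlt'
    · -- sS = δ : ω ∈ Z₁
      left
      show B δ ω = L
      refine le_antisymm hBδL ?_
      have hlow : ∀ k, L ≤ B (sq (φ k)) ω := by
        intro k
        refine le_trans (csInf_le hbddL ⟨sq (φ k), Set.mem_Ioi.mpr (hsq1 _), rfl⟩) (hsq3 _)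
      have : L ≤ B sS ω := ge_of_tendsto' hBlim hlow
      rwa [← heq] at this
    · -- δ < sS ≤ t : touch at sS, ω ∈ Z₂
      have hup : ∀ u, δ < u → u < sS → b u ≤ B sS ω := by
        intro u h1 h2
        have hev : ∀ᶠ k in atTop, u < sq (φ k) := hconv.eventually (lt_mem_nhds h2)
        refine ge_of_tendsto hBlim ?_
        filter_upwards [hev] with k hk
        exact le_trans (hmono (Set.mem_Ioi.mpr (hδ.trans h1))
          (Set.mem_Ioi.mpr (hδ.trans (hsq1 _))) hk.le) (hsq3 _)
      have htouch_ge : b sS ≤ B sS ω := by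
        refine le_of_tendsto (hlc sS (hδ.trans hlt')) ?_
        filter_upwards [Ioo_mem_nhdsLT_of_mem (Set.mem_Ioc.mpr ⟨hlt', le_rfl⟩)] with u hu
        exact hup u hu.1 hu.2
      have htouch : B sS ω = b sS := le_antisymm (hle sS hlt' hsSt) htouch_ge
      right
      show ((-(B δ ω) : ℝ) : EReal) = W ω
      refine le_antisymm ?_ ?_
      · -- approximation from the left by rationals
        have hratex : ∀ n:ℕ, ∃ q:ℚ, max δ (sS - 1/(n+1)) < (q:ℝ) ∧ (q:ℝ) < sS := by
          intro n
          refine exists_rat_btwn (max_lt hlt' ?_)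
          have : (0:ℝ) < 1/(n+1) := by positivity
          linarith
        choose qn hqn1 hqn2 using hratex
        have hq1 : ∀ n, δ < (qn n : ℝ) := fun n => (le_max_left _ _).trans_lt (hqn1 n)
        have hq3 : ∀ n, (qn n : ℝ) ≤ t := fun n => (hqn2 n).le.trans hsSt
        have hqtend : Tendsto (fun n => (qn n : ℝ)) atTop (nhds sS) := by
          have hlow : Tendsto (fun n : ℕ => sS - 1/((n:ℝ)+1)) atTop (nhds (sS - 0)) :=
            Tendsto.const_sub _ tendsto_one_div_add_atTop_nhds_zero_nat
          rw [sub_zero] at hlow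
          refine tendsto_of_tendsto_of_tendsto_of_le_of_le hlow tendsto_const_nhds ?_ ?_
          · intro n; exact ((le_max_right _ _).trans (hqn1 n).le)
          · intro n; exact (hqn2 n).le
        have hv1 : Tendsto (fun n => B ((qn n : ℚ) : ℝ) ω) atTop (nhds (B sS ω)) :=
          ((hB.cont ω).tendsto sS).comp hqtend
        have hv2 : Tendsto (fun n => b ((qn n : ℚ) : ℝ)) atTop (nhds (b sS)) := by
          refine (hlc sS (hδ.trans hlt')).comp ?_
          exact tendsto_nhdsWithin_of_tendsto_nhds_of_eventually_within _ hqtend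
            (Eventually.of_forall fun n => hqn2 n)
        have hreal : Tendsto (fun n => B ((qn n : ℚ) : ℝ) ω - B δ ω - b ((qn n : ℚ) : ℝ))
            atTop (nhds (-(B δ ω))) := by
          have := (hv1.sub (tendsto_const_nhds (x := B δ ω))).sub hv2
          have heq2 : B sS ω - B δ ω - b sS = -(B δ ω) := by rw [htouch]; ring
          rwa [heq2] at this
        have hEtend : Tendsto (fun n => ((B ((qn n : ℚ) : ℝ) ω - B δ ω - b ((qn n : ℚ) : ℝ) : ℝ) : EReal))
            atTop (nhds ((-(B δ ω) : ℝ) : EReal)) :=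
          (continuous_coe_real_ereal.tendsto _).comp hreal
        refine le_of_tendsto hEtend (Eventually.of_forall fun n => ?_)
        exact le_iSup (fun q : {q : ℚ // δ < (q:ℝ) ∧ (q:ℝ) ≤ t} =>
          ((B ((q:ℚ):ℝ) ω - B δ ω - b ((q:ℚ):ℝ) : ℝ) : EReal)) ⟨qn n, hq1 n, hq3 n⟩
      · refine iSup_le fun q => ?_
        obtain ⟨q, hq1, hq2⟩ := q
        have := hle ((q:ℚ):ℝ) hq1 hq2
        exact EReal.coe_le_coe_iff.mpr (by simpa using by linarith)
  -- null sets
  have hmap : P.map (B δ) = gaussianReal 0 (Real.toNNReal δ) := by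
    have h1 := hB.gauss 0 δ le_rfl hδ.le
    have h2 : (fun ω => B δ ω - B 0 ω) = B δ := by
      funext ω; rw [hB.init ω]; ring
    rw [h2] at h1
    rw [h1, sub_zero]
  have hvar : Real.toNNReal δ ≠ 0 := by
    simp only [ne_eq, Real.toNNReal_eq_zero, not_le]
    exact hδ
  have hsingleton : ∀ x : ℝ, P.map (B δ) {x} = 0 := by
    intro x
    rw [hmap]
    exact gaussianReal_absolutelyContinuous 0 hvar (Real.volume_singleton)
  have hZ₁0 : P Z₁ = 0 := by
    have : Z₁ = B δ ⁻¹' {L} := by ext ω; simp [hZ₁def]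
    rw [this, ← Measure.map_apply (hB.meas δ) (measurableSet_singleton L)]
    exact hsingleton L
  have hZ₂0 : P Z₂ = 0 := by
    by_cases hne : Nonempty {q : ℚ // δ < (q:ℝ) ∧ (q:ℝ) ≤ t}
    · obtain ⟨e, he⟩ := exists_surjective_nat {q : ℚ // δ < (q:ℝ) ∧ (q:ℝ) ≤ t}
      set er : ℕ → ℝ := fun n => (((e n : ℚ)) : ℝ) with herdef
      have her : ∀ n, δ < er n := fun n => (e n).2.1
      set v : ℕ → Ω → EReal := fun n ω => ((B (er n) ω - B δ ω - b (er n) : ℝ) : EReal) with hvdef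
      have hWeq : W = fun ω => ⨆ n, v n ω := by
        funext ω
        rw [hWdef]
        exact (he.iSup_comp fun q : {q : ℚ // δ < (q:ℝ) ∧ (q:ℝ) ≤ t} =>
          ((B ((q:ℚ):ℝ) ω - B δ ω - b ((q:ℚ):ℝ) : ℝ) : EReal)).symm
      have hvmeas : ∀ n, Measurable (v n) := by
        intro n
        exact measurable_coe_real_ereal.comp
          (((hB.meas _).sub (hB.meas δ)).sub measurable_const)
      have hWmeas : Measurable W := by
        rw [hWeq]; exact Measurable.iSup fun n => hvmeas n
      have hInd := indep_incr_countable hB hδ.le er her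
      have hIndF : IndepFun (B δ) W P := by
        have h1 : MeasurableSpace.comap (B δ) inferInstance ≤ Fpast B δ :=
          le_biSup (fun u => MeasurableSpace.comap (B u) inferInstance)
            (Set.mem_Icc.mpr ⟨hδ.le, le_rfl⟩)
        have h2 : MeasurableSpace.comap W inferInstance
            ≤ ⨆ n : ℕ, MeasurableSpace.comap (fun ω => B (er n) ω - B δ ω) inferInstance := by
          refine measurable_iff_comap_le.mp ?_
          rw [hWeq]
          refine Measurable.iSup fun n => ?_
          have hn : Measurable[⨆ n : ℕ,
              MeasurableSpace.comap (fun ω => B (er n) ω - B δ ω) inferInstance]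
              (fun ω => B (er n) ω - B δ ω) :=
            measurable_iff_comap_le.mpr
              (le_iSup (fun n => MeasurableSpace.comap
                (fun ω => B (er n) ω - B δ ω) inferInstance) n)
          exact (measurable_coe_real_ereal.comp (measurable_id.sub measurable_const)).comp hn
        exact indep_of_indep_of_le_left (indep_of_indep_of_le_right hInd h2) h1
      haveI : IsProbabilityMeasure (P.map W) := Measure.isProbabilityMeasure_map hWmeas.aemeasurable
      haveI : IsProbabilityMeasure (P.map (B δ)) :=
        Measure.isProbabilityMeasure_map (hB.meas δ).aemeasurable
      have hpair := (indepFun_iff_map_prod_eq_prod_map_map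
        (hB.meas δ).aemeasurable hWmeas.aemeasurable).mp hIndF
      set G : Set (ℝ × EReal) := {p | ((-p.1 : ℝ) : EReal) = p.2} with hGdef
      have hGmeas : MeasurableSet G := by
        have hf : Measurable fun p : ℝ × EReal => ((-p.1 : ℝ) : EReal) :=
          (measurable_coe_real_ereal.comp measurable_neg).comp measurable_fst
        have hg : Measurable fun p : ℝ × EReal => p.2 := measurable_snd
        have : G = {p : ℝ × EReal | ((-p.1 : ℝ) : EReal) ≤ p.2}
            ∩ {p : ℝ × EReal | p.2 ≤ ((-p.1 : ℝ) : EReal)} := by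
          ext p; simp only [hGdef, Set.mem_setOf_eq, Set.mem_inter_iff]
          constructor
          · intro h; exact ⟨h.le, h.ge⟩
          · intro h; exact le_antisymm h.1 h.2
        rw [this]
        exact (measurableSet_le hf hg).inter (measurableSet_le hg hf)
      have hZeq : Z₂ = (fun ω => (B δ ω, W ω)) ⁻¹' G := by
        ext ω; simp [hZ₂def, hGdef]
      have hcalc : P Z₂ = (P.map (fun ω => (B δ ω, W ω))) G := by
        rw [hZeq, Measure.map_apply ((hB.meas δ).prodMk hWmeas) hGmeas]
      rw [hcalc, hpair, Measure.prod_apply_symm hGmeas]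
      have hslice : ∀ y : EReal, (P.map (B δ)) ((fun x : ℝ => (x, y)) ⁻¹' G) = 0 := by
        intro y
        rcases em (∃ x₀ : ℝ, ((-x₀ : ℝ) : EReal) = y) with ⟨x₀, hx₀⟩ | hno
        · refine measure_mono_null (fun x hx => ?_) (hsingleton x₀)
          simp only [hGdef, Set.mem_preimage, Set.mem_setOf_eq] at hx
          have : ((-x : ℝ) : EReal) = ((-x₀ : ℝ) : EReal) := hx.trans hx₀.symm
          have := EReal.coe_eq_coe_iff.mp this
          simp only [Set.mem_singleton_iff]
          linarith
        · have hempty : ((fun x : ℝ => (x, y)) ⁻¹' G) = ∅ := by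
            ext x
            simp only [hGdef, Set.mem_preimage, Set.mem_setOf_eq, Set.mem_empty_iff_false,
              iff_false]
            exact fun h => hno ⟨x, h⟩
          simp [hempty]
      rw [lintegral_congr hslice]
      simp
    · have hempty : Z₂ = ∅ := by
        ext ω
        simp only [hZ₂def, Set.mem_setOf_eq, Set.mem_empty_iff_false, iff_false]
        intro h
        haveI := not_nonempty_iff.mp hne
        simp only [hWdef, iSup_of_empty] at h
        exact EReal.coe_ne_bot _ h
      rw [hempty]; exact measure_empty
  calc P {ω | ENNReal.ofReal t <
        ⨅ ε : {ε : ℝ // 0 < ε}, hitTimeAfter B δ (fun s x => b s + ↑ε ≤ x) ω}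
      ≤ P ({ω | ENNReal.ofReal t < hitTimeAfter B δ (fun s x => b s ≤ x) ω} ∪ (Z₁ ∪ Z₂)) :=
        measure_mono hsub
    _ ≤ P {ω | ENNReal.ofReal t < hitTimeAfter B δ (fun s x => b s ≤ x) ω} + P (Z₁ ∪ Z₂) :=
        measure_union_le _ _
    _ ≤ P {ω | ENNReal.ofReal t < hitTimeAfter B δ (fun s x => b s ≤ x) ω} + (P Z₁ + P Z₂) := by
        gcongr
        exact measure_union_le _ _
    _ = P {ω | ENNReal.ofReal t < hitTimeAfter B δ (fun s x => b s ≤ x) ω} := by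
        rw [hZ₁0, hZ₂0]; simp
end
end

section
/- Suppose b₁, b₂ : (0,∞) → ℝ₊ are left-continuous increasing functions such that B stopped at τ_{b₁} and B stopped at τ_{b₂} both have the same law μ supported in ℝ₊. Then b := b₁ ∧ b₂ also embeds μ: B_{τ_b} ~ μ, where τ_b = inf{t > 0 : B_t ≥ b(t)}. -/
open MeasureTheory ProbabilityTheory Filter Set
open scoped ENNReal NNReal

noncomputable section

variable {Ω : Type*} [MeasurableSpace Ω]

namespace MinEmbedAux

variable {B : ℝ → Ω → ℝ} {b b₁ b₂ : ℝ → ℝ} {ω : Ω} {t : ℝ}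

lemma hitTime_le (ht : 0 < t) (h : b t ≤ B t ω) :
    hitTime B (fun s x => b s ≤ x) ω ≤ ENNReal.ofReal t :=
  sInf_le ⟨t, ⟨ht, h⟩, rfl⟩

lemma lt_of_pos_of_lt_hitTime (ht : 0 < t)
    (h : ENNReal.ofReal t < hitTime B (fun s x => b s ≤ x) ω) : B t ω < b t := by
  by_contra h'
  exact absurd (hitTime_le ht (le_of_not_gt h')) (not_le.2 h)

/-- The hitting time of an increasing boundary is attained: at the hitting time the path is
(weakly) above the boundary. -/
lemma hitTime_attained (hcont : Continuous fun s => B s ω) (hm : MonotoneOn b (Ioi 0))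
    (h0 : hitTime B (fun s x => b s ≤ x) ω ≠ 0)
    (htop : hitTime B (fun s x => b s ≤ x) ω ≠ ∞) :
    b (hitTime B (fun s x => b s ≤ x) ω).toReal ≤
      B (hitTime B (fun s x => b s ≤ x) ω).toReal ω := by
  set τ := hitTime B (fun s x => b s ≤ x) ω with hτ
  set t₀ := τ.toReal with ht₀
  have ht₀pos : 0 < t₀ := ENNReal.toReal_pos h0 htop
  have hlb : ∀ s, 0 < s → b s ≤ B s ω → t₀ ≤ s := by
    intro s hs h
    exact ENNReal.toReal_le_of_le_ofReal hs.le (hitTime_le hs h)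
  by_contra hcon
  push_neg at hcon
  obtain ⟨δ, hδpos, hδ⟩ := Metric.eventually_nhds_iff.mp
    ((hcont.continuousAt (x := t₀)).eventually_lt_const hcon)
  have hlb2 : ∀ s, 0 < s → b s ≤ B s ω → t₀ + δ/2 ≤ s := by
    intro s hs h
    by_contra hlt
    push_neg at hlt
    have hst : t₀ ≤ s := hlb s hs h
    have hdist : dist s t₀ < δ := by
      rw [Real.dist_eq, abs_of_nonneg (by linarith)]; linarith
    exact absurd (lt_of_lt_of_le (hδ hdist) (hm (mem_Ioi.2 ht₀pos) (mem_Ioi.2 hs) hst))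
      (not_lt.2 h)
  have hge : ENNReal.ofReal (t₀ + δ/2) ≤ τ := by
    rw [hτ]
    refine le_sInf ?_
    rintro a ⟨s, ⟨hs, hbs⟩, rfl⟩
    exact ENNReal.ofReal_le_ofReal (hlb2 s hs hbs)
  have h2 : τ = ENNReal.ofReal t₀ := (ENNReal.ofReal_toReal htop).symm
  rw [h2, ENNReal.ofReal_le_ofReal_iff ht₀pos.le] at hge
  linarith

lemma hitTime_min (b₁ b₂ : ℝ → ℝ) (ω : Ω) :
    hitTime B (fun t x => min (b₁ t) (b₂ t) ≤ x) ω
      = min (hitTime B (fun t x => b₁ t ≤ x) ω) (hitTime B (fun t x => b₂ t ≤ x) ω) := by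
  have hset : {t : ℝ | 0 < t ∧ min (b₁ t) (b₂ t) ≤ B t ω}
      = {t : ℝ | 0 < t ∧ b₁ t ≤ B t ω} ∪ {t : ℝ | 0 < t ∧ b₂ t ≤ B t ω} := by
    ext t
    simp only [mem_setOf_eq, mem_union, min_le_iff]
    tauto
  unfold hitTime
  rw [hset, image_union, sInf_union]

/-- The crossing set: levels `x` at which the `x`-section of the region above `b₂` is contained
in the `x`-section of the region above `b₁`. -/
def Aset (b₁ b₂ : ℝ → ℝ) : Set ℝ :=
  ⋂ q : ℚ, if 0 < (q : ℝ) then Iio (b₂ q) ∪ Ici (b₁ q) else univ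

lemma measurableSet_Aset (b₁ b₂ : ℝ → ℝ) : MeasurableSet (Aset b₁ b₂) := by
  refine MeasurableSet.iInter fun q => ?_
  split_ifs
  · exact measurableSet_Iio.union measurableSet_Ici
  · exact MeasurableSet.univ

lemma mem_Aset_iff {x : ℝ} :
    x ∈ Aset b₁ b₂ ↔ ∀ q : ℚ, 0 < (q : ℝ) → b₂ q ≤ x → b₁ q ≤ x := by
  simp only [Aset, mem_iInter]
  refine forall_congr' fun q => ?_
  split_ifs with h
  · simp [or_iff_not_imp_left, not_lt, h]
  · simp [h]

lemma Aset_prop (hx : t ∈ Aset b₁ b₂) (h₁m : MonotoneOn b₁ (Ioi 0))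
    (h₁lc : ∀ s > (0:ℝ), Tendsto b₁ (nhdsWithin s (Iio s)) (nhds (b₁ s)))
    (h₂m : MonotoneOn b₂ (Ioi 0))
    {s : ℝ} (hs : 0 < s) (h : b₂ s ≤ t) : b₁ s ≤ t := by
  rw [mem_Aset_iff] at hx
  have hALL : ∀ u ∈ Ioo (0:ℝ) s, b₁ u ≤ t := by
    intro u hu
    obtain ⟨q, hq1, hq2⟩ := exists_rat_btwn hu.2
    have hq0 : 0 < (q : ℝ) := hu.1.trans hq1
    exact le_trans (h₁m (mem_Ioi.2 hu.1) (mem_Ioi.2 hq0) hq1.le)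
      (hx q hq0 (le_trans (h₂m (mem_Ioi.2 hq0) (mem_Ioi.2 hs) hq2.le) h))
  exact le_of_tendsto (h₁lc s hs)
    (eventually_of_mem (Ioo_mem_nhdsLT_of_mem ⟨hs, le_refl s⟩) hALL)

lemma notAset_prop (hx : t ∉ Aset b₁ b₂) (h₁m : MonotoneOn b₁ (Ioi 0))
    (h₂m : MonotoneOn b₂ (Ioi 0)) {s : ℝ} (hs : 0 < s) (h : b₁ s ≤ t) : b₂ s ≤ t := by
  rw [mem_Aset_iff] at hx
  push_neg at hx
  obtain ⟨q, hq0, hq2, hq1⟩ := hx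
  have htq : s ≤ (q : ℝ) := by
    by_contra hlt
    push_neg at hlt
    exact absurd (le_trans (h₁m (mem_Ioi.2 hq0) (mem_Ioi.2 hs) hlt.le) h) (not_le.2 hq1)
  exact le_trans (h₂m (mem_Ioi.2 hs) (mem_Ioi.2 hq0) htq) hq2

/-- If `τ₁ ≤ τ₂` (both in `(0,∞)`), the value stopped by `b₁` is at most the value
stopped by `b₂`. -/
lemma stoppedValue_le (hcont : Continuous fun s => B s ω) (h₂m : MonotoneOn b₂ (Ioi 0))
    (h10 : hitTime B (fun s x => b₁ s ≤ x) ω ≠ 0)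
    (h1t : hitTime B (fun s x => b₁ s ≤ x) ω ≠ ∞)
    (h20 : hitTime B (fun s x => b₂ s ≤ x) ω ≠ 0)
    (h2t : hitTime B (fun s x => b₂ s ≤ x) ω ≠ ∞)
    (hle : hitTime B (fun s x => b₁ s ≤ x) ω ≤ hitTime B (fun s x => b₂ s ≤ x) ω) :
    _root_.stoppedValue B (hitTime B fun s x => b₁ s ≤ x) ω ≤
      _root_.stoppedValue B (hitTime B fun s x => b₂ s ≤ x) ω := by
  rcases eq_or_lt_of_le hle with heq | hlt
  · unfold _root_.stoppedValue
    rw [heq]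
  · have h1pos := ENNReal.toReal_pos h10 h1t
    have h2pos := ENNReal.toReal_pos h20 h2t
    have hof : ENNReal.ofReal (hitTime B (fun s x => b₁ s ≤ x) ω).toReal
        = hitTime B (fun s x => b₁ s ≤ x) ω := ENNReal.ofReal_toReal h1t
    have step1 : B (hitTime B (fun s x => b₁ s ≤ x) ω).toReal ω
        < b₂ (hitTime B (fun s x => b₁ s ≤ x) ω).toReal :=
      lt_of_pos_of_lt_hitTime h1pos (by rw [hof]; exact hlt)
    have step2 : b₂ (hitTime B (fun s x => b₁ s ≤ x) ω).toReal
        ≤ b₂ (hitTime B (fun s x => b₂ s ≤ x) ω).toReal :=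
      h₂m (mem_Ioi.2 h1pos) (mem_Ioi.2 h2pos) ((ENNReal.toReal_le_toReal h1t h2t).2 hle)
    have step3 := hitTime_attained (b := b₂) hcont h₂m h20 h2t
    unfold _root_.stoppedValue
    exact (step1.trans_le (step2.trans step3)).le

end MinEmbedAux

open MinEmbedAux

/-- If two left-continuous increasing boundaries `b₁, b₂` both embed the
law `μ` (supported in `ℝ₊` with no atom at `0`) into Brownian motion, then so does their
minimum `b₁ ∧ b₂`. -/
theorem min_of_embedding_boundaries_embeds
    (P : Measure Ω) (B : ℝ → Ω → ℝ) (hB : IsStandardBM P B)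
    (μ : Measure ℝ) [IsProbabilityMeasure μ] (hsupp : μ (Iio 0) = 0) (h0 : μ {0} = 0)
    (b₁ b₂ : ℝ → ℝ) (h₁nn : ∀ t > (0:ℝ), 0 ≤ b₁ t) (h₂nn : ∀ t > (0:ℝ), 0 ≤ b₂ t)
    (h₁m : MonotoneOn b₁ (Ioi 0)) (h₂m : MonotoneOn b₂ (Ioi 0))
    (h₁lc : ∀ t > (0:ℝ), Tendsto b₁ (nhdsWithin t (Iio t)) (nhds (b₁ t)))
    (h₂lc : ∀ t > (0:ℝ), Tendsto b₂ (nhdsWithin t (Iio t)) (nhds (b₂ t)))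
    (hl₁ : P.map (stoppedValue B (hitTime B fun t x => b₁ t ≤ x)) = μ)
    (hl₂ : P.map (stoppedValue B (hitTime B fun t x => b₂ t ≤ x)) = μ) :
    P.map (stoppedValue B (hitTime B fun t x => min (b₁ t) (b₂ t) ≤ x)) = μ := by
  haveI := hB.isProb
  set τ₁ : Ω → ℝ≥0∞ := hitTime B (fun t x => b₁ t ≤ x) with hτ₁def
  set τ₂ : Ω → ℝ≥0∞ := hitTime B (fun t x => b₂ t ≤ x) with hτ₂def
  set sv₁ : Ω → ℝ := _root_.stoppedValue B τ₁ with hsv₁def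
  set sv₂ : Ω → ℝ := _root_.stoppedValue B τ₂ with hsv₂def
  set Z : Ω → ℝ := _root_.stoppedValue B (hitTime B fun t x => min (b₁ t) (b₂ t) ≤ x) with hZdef
  -- the stopped values are a.e. measurable
  have hsv₁m : AEMeasurable sv₁ P := by
    by_contra h
    rw [Measure.map_of_not_aemeasurable h] at hl₁
    exact (IsProbabilityMeasure.ne_zero μ) hl₁.symm
  have hsv₂m : AEMeasurable sv₂ P := by
    by_contra h
    rw [Measure.map_of_not_aemeasurable h] at hl₂
    exact (IsProbabilityMeasure.ne_zero μ) hl₂.symm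
  -- the degenerate set is null
  have hN1 : P (sv₁ ⁻¹' {0}) = 0 := by
    have := Measure.map_apply_of_aemeasurable hsv₁m (measurableSet_singleton (0:ℝ))
    rw [← this, hl₁]; exact h0
  have hN2 : P (sv₂ ⁻¹' {0}) = 0 := by
    have := Measure.map_apply_of_aemeasurable hsv₂m (measurableSet_singleton (0:ℝ))
    rw [← this, hl₂]; exact h0
  set N : Set Ω := sv₁ ⁻¹' {0} ∪ sv₂ ⁻¹' {0} with hNdef
  have hNnull : P N = 0 := measure_union_null hN1 hN2
  -- off N, the hitting times are in (0, ∞)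
  have hGood : ∀ ω, ω ∉ N →
      (τ₁ ω ≠ 0 ∧ τ₁ ω ≠ ∞) ∧ (τ₂ ω ≠ 0 ∧ τ₂ ω ≠ ∞) := by
    intro ω hω
    simp only [hNdef, mem_union, mem_preimage, mem_singleton_iff, not_or] at hω
    have e1 : ∀ h : τ₁ ω = 0, sv₁ ω = 0 := fun h => by
      show B (τ₁ ω).toReal ω = 0
      rw [h]; simpa using hB.init ω
    have e2 : ∀ h : τ₁ ω = ∞, sv₁ ω = 0 := fun h => by
      show B (τ₁ ω).toReal ω = 0
      rw [h]; simpa using hB.init ω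
    have e3 : ∀ h : τ₂ ω = 0, sv₂ ω = 0 := fun h => by
      show B (τ₂ ω).toReal ω = 0
      rw [h]; simpa using hB.init ω
    have e4 : ∀ h : τ₂ ω = ∞, sv₂ ω = 0 := fun h => by
      show B (τ₂ ω).toReal ω = 0
      rw [h]; simpa using hB.init ω
    exact ⟨⟨fun h => hω.1 (e1 h), fun h => hω.1 (e2 h)⟩,
      ⟨fun h => hω.2 (e3 h), fun h => hω.2 (e4 h)⟩⟩
  have hmincomm : (fun t x => min (b₂ t) (b₁ t) ≤ x) = (fun t x => min (b₁ t) (b₂ t) ≤ x) := by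
    funext t x
    rw [min_comm]
  -- off N, Z = min sv₁ sv₂
  have hZmin : ∀ ω, ω ∉ N → Z ω = min (sv₁ ω) (sv₂ ω) := by
    intro ω hω
    obtain ⟨⟨h10, h1t⟩, ⟨h20, h2t⟩⟩ := hGood ω hω
    rcases le_total (τ₁ ω) (τ₂ ω) with hle | hle
    · have hmin : hitTime B (fun t x => min (b₁ t) (b₂ t) ≤ x) ω = τ₁ ω := by
        rw [hitTime_min b₁ b₂ ω, ← hτ₁def, ← hτ₂def, min_eq_left hle]
      have hsvle : sv₁ ω ≤ sv₂ ω :=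
        stoppedValue_le (hB.cont ω) h₂m h10 h1t h20 h2t hle
      rw [hZdef]
      show B ((hitTime B (fun t x => min (b₁ t) (b₂ t) ≤ x) ω)).toReal ω = _
      rw [hmin, min_eq_left hsvle]
      rfl
    · have hmin : hitTime B (fun t x => min (b₁ t) (b₂ t) ≤ x) ω = τ₂ ω := by
        rw [hitTime_min b₁ b₂ ω, ← hτ₁def, ← hτ₂def, min_eq_right hle]
      have hsvle : sv₂ ω ≤ sv₁ ω :=
        stoppedValue_le (hB.cont ω) h₁m h20 h2t h10 h1t hle
      rw [hZdef]
      show B ((hitTime B (fun t x => min (b₁ t) (b₂ t) ≤ x) ω)).toReal ω = _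
      rw [hmin, min_eq_right hsvle]
      rfl
  -- monotonicity of the min boundary
  have hminm : MonotoneOn (fun t => min (b₁ t) (b₂ t)) (Ioi 0) := by
    intro t ht s hs hts
    exact le_min ((min_le_left _ _).trans (h₁m ht hs hts))
      ((min_le_right _ _).trans (h₂m ht hs hts))
  -- off N, if Z ∈ A then Z = sv₁
  have hZA : ∀ ω, ω ∉ N → Z ω ∈ Aset b₁ b₂ → Z ω = sv₁ ω := by
    intro ω hω hx
    obtain ⟨⟨h10, h1t⟩, ⟨h20, h2t⟩⟩ := hGood ω hω
    set τ : ℝ≥0∞ := hitTime B (fun t x => min (b₁ t) (b₂ t) ≤ x) ω with hτdef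
    have hτeq : τ = min (τ₁ ω) (τ₂ ω) := hitTime_min b₁ b₂ ω
    have hτ0 : τ ≠ 0 := by
      rw [hτeq]
      rcases min_cases (τ₁ ω) (τ₂ ω) with ⟨h, _⟩ | ⟨h, _⟩ <;> rw [h] <;> assumption
    have hτt : τ ≠ ∞ := by
      rw [hτeq]
      rcases min_cases (τ₁ ω) (τ₂ ω) with ⟨h, _⟩ | ⟨h, _⟩ <;> rw [h] <;> assumption
    have hτpos : 0 < τ.toReal := ENNReal.toReal_pos hτ0 hτt
    have hatt : min (b₁ τ.toReal) (b₂ τ.toReal) ≤ B τ.toReal ω :=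
      hitTime_attained (b := fun t => min (b₁ t) (b₂ t)) (hB.cont ω) hminm hτ0 hτt
    have hZval : Z ω = B τ.toReal ω := rfl
    have hb₁ : b₁ τ.toReal ≤ B τ.toReal ω := by
      rcases min_le_iff.1 hatt with h | h
      · exact h
      · rw [← hZval] at h ⊢
        exact Aset_prop hx h₁m h₁lc h₂m hτpos h
    have hτ₁le : τ₁ ω ≤ τ := by
      have := hitTime_le (B := B) (b := b₁) hτpos hb₁
      rwa [ENNReal.ofReal_toReal hτt] at this
    have hτeq₁ : τ = τ₁ ω := le_antisymm (hτeq ▸ min_le_left _ _) hτ₁le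
    show B τ.toReal ω = B ((τ₁ ω)).toReal ω
    rw [hτeq₁]
  -- off N, if Z ∉ A then Z = sv₂
  have hZAc : ∀ ω, ω ∉ N → Z ω ∉ Aset b₁ b₂ → Z ω = sv₂ ω := by
    intro ω hω hx
    obtain ⟨⟨h10, h1t⟩, ⟨h20, h2t⟩⟩ := hGood ω hω
    set τ : ℝ≥0∞ := hitTime B (fun t x => min (b₁ t) (b₂ t) ≤ x) ω with hτdef
    have hτeq : τ = min (τ₁ ω) (τ₂ ω) := hitTime_min b₁ b₂ ω
    have hτ0 : τ ≠ 0 := by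
      rw [hτeq]
      rcases min_cases (τ₁ ω) (τ₂ ω) with ⟨h, _⟩ | ⟨h, _⟩ <;> rw [h] <;> assumption
    have hτt : τ ≠ ∞ := by
      rw [hτeq]
      rcases min_cases (τ₁ ω) (τ₂ ω) with ⟨h, _⟩ | ⟨h, _⟩ <;> rw [h] <;> assumption
    have hτpos : 0 < τ.toReal := ENNReal.toReal_pos hτ0 hτt
    have hatt : min (b₁ τ.toReal) (b₂ τ.toReal) ≤ B τ.toReal ω :=
      hitTime_attained (b := fun t => min (b₁ t) (b₂ t)) (hB.cont ω) hminm hτ0 hτt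
    have hZval : Z ω = B τ.toReal ω := rfl
    have hb₂ : b₂ τ.toReal ≤ B τ.toReal ω := by
      rcases min_le_iff.1 hatt with h | h
      · rw [← hZval] at h ⊢
        exact notAset_prop hx h₁m h₂m hτpos h
      · exact h
    have hτ₂le : τ₂ ω ≤ τ := by
      have := hitTime_le (B := B) (b := b₂) hτpos hb₂
      rwa [ENNReal.ofReal_toReal hτt] at this
    have hτeq₂ : τ = τ₂ ω := le_antisymm (hτeq ▸ min_le_right _ _) hτ₂le
    show B τ.toReal ω = B ((τ₂ ω)).toReal ω
    rw [hτeq₂]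
  -- replace Z by the a.e. measurable min sv₁ sv₂
  set m : Ω → ℝ := fun ω => min (sv₁ ω) (sv₂ ω) with hmdef
  have hmm : AEMeasurable m P := hsv₁m.min hsv₂m
  have hZae : Z =ᵐ[P] m := by
    refine (measure_mono_null ?_ hNnull : P {ω | ¬ Z ω = m ω} = 0)
    intro ω hω
    by_contra hωN
    exact hω (hZmin ω hωN)
  have hmapZ : P.map Z = P.map m := Measure.map_congr hZae
  rw [hmapZ]
  -- now show P.map m = μ
  set ν : Measure ℝ := P.map m with hνdef
  haveI : IsProbabilityMeasure ν := Measure.isProbabilityMeasure_map hmm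
  have hA : MeasurableSet (Aset b₁ b₂) := measurableSet_Aset b₁ b₂
  -- key: ν F ≤ μ F for F ⊆ A and F ⊆ Aᶜ
  have keyA : ∀ F : Set ℝ, MeasurableSet F → F ⊆ Aset b₁ b₂ → ν F ≤ μ F := by
    intro F hF hFA
    rw [hνdef, Measure.map_apply_of_aemeasurable hmm hF]
    have hsub : m ⁻¹' F ⊆ sv₁ ⁻¹' F ∪ N := by
      intro ω hω
      by_cases hωN : ω ∈ N
      · exact Or.inr hωN
      · left
        have h1 : Z ω = m ω := hZmin ω hωN
        have h2 : Z ω = sv₁ ω := hZA ω hωN (h1 ▸ hFA hω)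
        show sv₁ ω ∈ F
        rw [← h2, h1]
        exact hω
    calc P (m ⁻¹' F) ≤ P (sv₁ ⁻¹' F ∪ N) := measure_mono hsub
      _ ≤ P (sv₁ ⁻¹' F) + P N := measure_union_le _ _
      _ = P (sv₁ ⁻¹' F) := by rw [hNnull, add_zero]
      _ = μ F := by
          rw [← Measure.map_apply_of_aemeasurable hsv₁m hF, hl₁]
  have keyAc : ∀ F : Set ℝ, MeasurableSet F → F ⊆ (Aset b₁ b₂)ᶜ → ν F ≤ μ F := by
    intro F hF hFA
    rw [hνdef, Measure.map_apply_of_aemeasurable hmm hF]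
    have hsub : m ⁻¹' F ⊆ sv₂ ⁻¹' F ∪ N := by
      intro ω hω
      by_cases hωN : ω ∈ N
      · exact Or.inr hωN
      · left
        have h1 : Z ω = m ω := hZmin ω hωN
        have h2 : Z ω = sv₂ ω := hZAc ω hωN (fun hmem => hFA hω (h1 ▸ hmem))
        show sv₂ ω ∈ F
        rw [← h2, h1]
        exact hω
    calc P (m ⁻¹' F) ≤ P (sv₂ ⁻¹' F ∪ N) := measure_mono hsub
      _ ≤ P (sv₂ ⁻¹' F) + P N := measure_union_le _ _
      _ = P (sv₂ ⁻¹' F) := by rw [hNnull, add_zero]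
      _ = μ F := by
          rw [← Measure.map_apply_of_aemeasurable hsv₂m hF, hl₂]
  -- ν ≤ μ on all measurable sets
  have hle : ∀ E : Set ℝ, MeasurableSet E → ν E ≤ μ E := by
    intro E hE
    have h1 : ν (E ∩ Aset b₁ b₂) ≤ μ (E ∩ Aset b₁ b₂) :=
      keyA _ (hE.inter hA) inter_subset_right
    have h2 : ν (E ∩ (Aset b₁ b₂)ᶜ) ≤ μ (E ∩ (Aset b₁ b₂)ᶜ) :=
      keyAc _ (hE.inter hA.compl) inter_subset_right
    calc ν E = ν (E ∩ Aset b₁ b₂) + ν (E ∩ (Aset b₁ b₂)ᶜ) :=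
        (measure_inter_add_diff₀ E hA.nullMeasurableSet).symm.trans (by rw [diff_eq])
      _ ≤ μ (E ∩ Aset b₁ b₂) + μ (E ∩ (Aset b₁ b₂)ᶜ) := add_le_add h1 h2
      _ = μ E := by
          rw [← diff_eq, measure_inter_add_diff₀ E hA.nullMeasurableSet]
  -- two probability measures with ν ≤ μ are equal
  refine Measure.ext fun E hE => ?_
  have h1 := hle E hE
  have h2 := hle Eᶜ hE.compl
  have hsum : ν E + ν Eᶜ = μ E + μ Eᶜ := by
    rw [measure_add_measure_compl hE, measure_add_measure_compl hE,
      measure_univ, measure_univ]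
  refine le_antisymm h1 ?_
  by_contra hlt
  push_neg at hlt
  have : ν E + ν Eᶜ < μ E + μ Eᶜ :=
    ENNReal.add_lt_add_of_lt_of_le (measure_ne_top ν Eᶜ) hlt h2
  rw [hsum] at this
  exact lt_irrefl _ this
end
end

section
/- Let F : [0,∞) → ℝ be a concave function with t·F'(t) → 0 as t ↓ 0 and F'(t) → 0 as t → ∞, where F' is the right derivative. Then for any nonnegative random variable ρ, E[F(ρ)] = F(0) − ∫₀^∞ (∫₀^t P(ρ > s) ds) dF'(t), where dF' is the (negative) Lebesgue–Stieltjes measure of F'. -/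
open MeasureTheory ProbabilityTheory Filter Set
open scoped ENNReal NNReal

noncomputable section

variable {Ω : Type*} [MeasurableSpace Ω]

lemma stieltjes_measure_Ioi' (f : StieltjesFunction ℝ) {l : ℝ}
    (hf : Tendsto f atTop (nhds l)) (x : ℝ) :
    f.measure (Ioi x) = ENNReal.ofReal (l - f x) := by
  have hdisj : Disjoint ({x} : Set ℝ) (Ioi x) := by simp
  have hunion : ({x} : Set ℝ) ∪ Ioi x = Ici x := by
    rw [Set.singleton_union, Set.Ioi_insert]
  have h1 : f.measure (Ici x) = f.measure {x} + f.measure (Ioi x) := by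
    rw [← hunion, measure_union hdisj measurableSet_Ioi]
  rw [f.measure_Ici hf, f.measure_singleton] at h1
  have hll : Function.leftLim f x ≤ f x := f.mono.leftLim_le le_rfl
  have hfl : f x ≤ l := f.mono.ge_of_tendsto hf x
  have h2 : ENNReal.ofReal (l - Function.leftLim f x)
      = ENNReal.ofReal (f x - Function.leftLim f x) + ENNReal.ofReal (l - f x) := by
    rw [← ENNReal.ofReal_add (by linarith) (by linarith)]
    ring_nf
  rw [h2] at h1
  exact ((ENNReal.add_right_inj ENNReal.ofReal_ne_top).mp h1).symm


/-- For a concave `F` on `[0,∞)` with right derivative `F'` satisfying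
`t·F'(t) → 0` as `t ↓ 0` and `F'(t) → 0` as `t → ∞`, and any nonnegative random variable
`ρ`, one has `E F(ρ) = F(0) - ∫₀^∞ (∫₀^t P(ρ > s) ds) dF'(t)`; here the negative measure
`dF'` is expressed through the Stieltjes measure of `G = -F'`. -/
theorem concave_expectation_formula
    (P : Measure Ω) [IsProbabilityMeasure P] (ρ : Ω → ℝ)
    (hρm : Measurable ρ) (hρ0 : ∀ ω, 0 ≤ ρ ω)
    (F F' : ℝ → ℝ) (hconc : ConcaveOn ℝ (Ici 0) F)
    (hF' : ∀ t ≥ (0:ℝ), HasDerivWithinAt F (F' t) (Ioi t) t)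
    (hF'0 : Tendsto (fun t => t * F' t) (nhdsWithin 0 (Ioi 0)) (nhds 0))
    (hF'inf : Tendsto F' atTop (nhds 0))
    (G : StieltjesFunction ℝ) (hG : ∀ t ≥ (0:ℝ), G t = - F' t)
    (hint : Integrable (fun ω => F (ρ ω)) P) :
    ∫ ω, F (ρ ω) ∂P = F 0 +
      ∫ t in Ioi (0:ℝ), (∫ s in (0:ℝ)..t, (P {ω | s < ρ ω}).toReal) ∂G.measure := by
  -- Basic facts about G and F'
  have hGtop : Tendsto (fun t => G t) atTop (nhds 0) := by
    have h1 : Tendsto (fun t => -F' t) atTop (nhds 0) := by simpa using hF'inf.neg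
    exact Tendsto.congr'
      (by filter_upwards [eventually_ge_atTop (0:ℝ)] with t ht using (hG t ht).symm) h1
  have hGIoi : ∀ s : ℝ, 0 ≤ s → G.measure (Ioi s) = ENNReal.ofReal (F' s) := by
    intro s hs
    rw [stieltjes_measure_Ioi' G hGtop s, hG s hs]
    ring_nf
  have hGle : ∀ s, G s ≤ 0 := fun s => G.mono.ge_of_tendsto hGtop s
  have hF'nonneg : ∀ s : ℝ, 0 ≤ s → 0 ≤ F' s := by
    intro s hs
    have h := hGle s
    rw [hG s hs] at h
    linarith
  have hF'anti : AntitoneOn F' (Ici 0) := by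
    intro a ha b hb hab
    have := G.mono hab
    rw [hG a ha, hG b hb] at *
    linarith [G.mono hab]
  have hF'ii : ∀ x : ℝ, 0 ≤ x → IntervalIntegrable F' volume 0 x := fun x hx =>
    (hF'anti.mono (by rw [uIcc_of_le hx]; exact Icc_subset_Ici_self)).intervalIntegrable
  -- FTC for the right derivative
  have hFTC : ∀ x : ℝ, 0 ≤ x → ∫ s in (0:ℝ)..x, F' s = F x - F 0 := by
    intro x hx
    apply intervalIntegral.integral_eq_sub_of_hasDeriv_right_of_le hx ?_
      (fun c hc => hF' c hc.1.le) (hF'ii x hx)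
    intro c hc
    rcases eq_or_lt_of_le hc.1 with h0 | h0
    · have h := (hF' 0 le_rfl).continuousWithinAt
      have h2 : ContinuousWithinAt F (insert 0 (Ioi 0)) 0 := h.insert
      rw [← h0]
      exact h2.mono (fun y hy => hy.1.eq_or_lt.imp (fun h => h.symm) id)
    · have hco := hconc.continuousOn_interior
      rw [interior_Ici] at hco
      exact ((hco c h0).continuousAt (Ioi_mem_nhds h0)).continuousWithinAt
  have hFmono0 : ∀ x : ℝ, 0 ≤ x → F 0 ≤ F x := by
    intro x hx
    have h := hFTC x hx
    have h2 : 0 ≤ ∫ s in (0:ℝ)..x, F' s :=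
      intervalIntegral.integral_nonneg hx (fun s hs => hF'nonneg s hs.1)
    linarith
  -- survival function
  have hQanti : Antitone (fun s => P {ω | s < ρ ω}) := fun a b hab =>
    measure_mono (fun ω (h : b < ρ ω) => lt_of_le_of_lt hab h)
  have hQm : Measurable fun s => P {ω | s < ρ ω} := hQanti.measurable
  have hQset : ∀ s : ℝ, MeasurableSet {ω | s < ρ ω} := fun s =>
    measurableSet_lt measurable_const hρm
  -- the key pointwise identity
  have key3 : ∀ x : ℝ, 0 ≤ x →
      (∫⁻ t in Ioi (0:ℝ), ENNReal.ofReal (min t x) ∂G.measure)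
        = ENNReal.ofReal (F x - F 0) := by
    intro x hx
    set S : Set (ℝ × ℝ) := {p | 0 < p.2 ∧ p.2 < p.1 ∧ p.2 < x} with hS
    have hSm : MeasurableSet S :=
      (measurableSet_lt measurable_const measurable_snd).inter
        ((measurableSet_lt measurable_snd measurable_fst).inter
          (measurableSet_lt measurable_snd measurable_const))
    have step1 : ∀ t ∈ Ioi (0:ℝ), ENNReal.ofReal (min t x)
        = ∫⁻ s, S.indicator (fun _ => (1 : ℝ≥0∞)) (t, s) := by
      intro t ht
      have hslice : (fun s => S.indicator (fun _ => (1:ℝ≥0∞)) (t, s))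
          = (Ioo 0 (min t x)).indicator (fun _ => 1) := by
        funext s
        have hiff : (t, s) ∈ S ↔ s ∈ Ioo 0 (min t x) := by
          simp only [hS, mem_setOf_eq, mem_Ioo, lt_min_iff]
          try tauto
        simp only [Set.indicator_apply]
        rw [if_congr hiff rfl rfl]
      rw [hslice, lintegral_indicator measurableSet_Ioo, setLIntegral_one, Real.volume_Ioo,
        sub_zero]
    rw [setLIntegral_congr_fun measurableSet_Ioi step1]
    have hswap := lintegral_lintegral_swap (μ := G.measure.restrict (Ioi 0)) (ν := volume)
      (f := fun t s => S.indicator (fun _ => (1:ℝ≥0∞)) (t, s))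
      ((measurable_const.indicator hSm).aemeasurable)
    rw [hswap]
    have inner_eq : ∀ s : ℝ,
        (∫⁻ t in Ioi (0:ℝ), S.indicator (fun _ => (1:ℝ≥0∞)) (t, s) ∂G.measure)
          = (Ioo 0 x).indicator (fun s => ENNReal.ofReal (F' s)) s := by
      intro s
      by_cases hs : s ∈ Ioo 0 x
      · have hs1 := hs.1
        have hs2 := hs.2
        have h1 : (fun t => S.indicator (fun _ => (1:ℝ≥0∞)) (t, s))
            = (Ioi s).indicator (fun _ => 1) := by
          funext t
          have hiff : (t, s) ∈ S ↔ t ∈ Ioi s := by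
            simp only [hS, mem_setOf_eq, mem_Ioi]
            exact ⟨fun h => h.2.1, fun h => ⟨hs1, h, hs2⟩⟩
          simp only [Set.indicator_apply]
          rw [if_congr hiff rfl rfl]
        rw [h1, lintegral_indicator measurableSet_Ioi, Measure.restrict_restrict measurableSet_Ioi,
          setLIntegral_one, Set.Ioi_inter_Ioi, max_eq_left hs1.le, hGIoi s hs1.le,
          Set.indicator_of_mem hs]
      · have h1 : (fun t => S.indicator (fun _ => (1:ℝ≥0∞)) (t, s)) = fun _ => 0 := by
          funext t
          apply Set.indicator_of_notMem
          intro hmem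
          exact hs ⟨hmem.1, hmem.2.2⟩
        rw [h1, lintegral_zero, Set.indicator_of_notMem hs]
    rw [lintegral_congr inner_eq, lintegral_indicator measurableSet_Ioo]
    have hFi : IntegrableOn F' (Ioo 0 x) volume :=
      ((intervalIntegrable_iff_integrableOn_Ioc_of_le hx).mp (hF'ii x hx)).mono_set
        Ioo_subset_Ioc_self
    have hnn : 0 ≤ᵐ[volume.restrict (Ioo 0 x)] F' :=
      (ae_restrict_iff' measurableSet_Ioo).2 (ae_of_all _ fun s hs => hF'nonneg s hs.1.le)
    rw [← ofReal_integral_eq_lintegral_ofReal hFi hnn, ← integral_Ioc_eq_integral_Ioo,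
      ← intervalIntegral.integral_of_le hx, hFTC x hx]
  -- Step A: global swap
  have L1 : ∫⁻ ω, ENNReal.ofReal (F (ρ ω) - F 0) ∂P
      = ∫⁻ t in Ioi (0:ℝ), (∫⁻ ω, ENNReal.ofReal (min t (ρ ω)) ∂P) ∂G.measure := by
    have e1 : ∀ ω, ENNReal.ofReal (F (ρ ω) - F 0)
        = ∫⁻ t in Ioi (0:ℝ), ENNReal.ofReal (min t (ρ ω)) ∂G.measure :=
      fun ω => (key3 (ρ ω) (hρ0 ω)).symm
    rw [lintegral_congr e1]
    exact lintegral_lintegral_swap (μ := P) (ν := G.measure.restrict (Ioi 0))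
      (f := fun ω t => ENNReal.ofReal (min t (ρ ω)))
      ((measurable_snd.min (hρm.comp measurable_fst)).ennreal_ofReal.aemeasurable)
  -- Step B: inner swap for fixed t
  have L2 : ∀ t : ℝ, 0 < t → (∫⁻ ω, ENNReal.ofReal (min t (ρ ω)) ∂P)
      = ∫⁻ s in Ioo 0 t, P {ω | s < ρ ω} ∂volume := by
    intro t ht
    set S : Set (Ω × ℝ) := {p | 0 < p.2 ∧ p.2 < t ∧ p.2 < ρ p.1} with hS
    have hSm : MeasurableSet S :=
      (measurableSet_lt measurable_const measurable_snd).inter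
        ((measurableSet_lt measurable_snd measurable_const).inter
          (measurableSet_lt measurable_snd (hρm.comp measurable_fst)))
    have e1 : ∀ ω, ENNReal.ofReal (min t (ρ ω))
        = ∫⁻ s, S.indicator (fun _ => (1:ℝ≥0∞)) (ω, s) := by
      intro ω
      have hslice : (fun s => S.indicator (fun _ => (1:ℝ≥0∞)) (ω, s))
          = (Ioo 0 (min t (ρ ω))).indicator (fun _ => 1) := by
        funext s
        have hiff : (ω, s) ∈ S ↔ s ∈ Ioo 0 (min t (ρ ω)) := by
          simp only [hS, mem_setOf_eq, mem_Ioo, lt_min_iff]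
          try tauto
        simp only [Set.indicator_apply]
        rw [if_congr hiff rfl rfl]
      rw [hslice, lintegral_indicator measurableSet_Ioo, setLIntegral_one, Real.volume_Ioo,
        sub_zero]
    rw [lintegral_congr e1,
      lintegral_lintegral_swap (μ := P) (ν := volume)
        (f := fun ω s => S.indicator (fun _ => (1:ℝ≥0∞)) (ω, s))
        ((measurable_const.indicator hSm).aemeasurable)]
    have e2 : ∀ s : ℝ, (∫⁻ ω, S.indicator (fun _ => (1:ℝ≥0∞)) (ω, s) ∂P)
        = (Ioo 0 t).indicator (fun s => P {ω | s < ρ ω}) s := by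
      intro s
      by_cases hs : s ∈ Ioo 0 t
      · have h1 : (fun ω => S.indicator (fun _ => (1:ℝ≥0∞)) (ω, s))
            = ({ω | s < ρ ω}).indicator (fun _ => 1) := by
          funext ω
          have hiff : (ω, s) ∈ S ↔ ω ∈ {ω | s < ρ ω} := by
            simp only [hS, mem_setOf_eq]
            exact ⟨fun h => h.2.2, fun h => ⟨hs.1, hs.2, h⟩⟩
          simp only [Set.indicator_apply]
          rw [if_congr hiff rfl rfl]
        rw [h1, lintegral_indicator (hQset s), setLIntegral_one, Set.indicator_of_mem hs]
      · have h1 : (fun ω => S.indicator (fun _ => (1:ℝ≥0∞)) (ω, s)) = fun _ => 0 := by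
          funext ω
          apply Set.indicator_of_notMem
          intro hmem
          exact hs ⟨hmem.1, hmem.2.1⟩
        rw [h1, lintegral_zero, Set.indicator_of_notMem hs]
    rw [lintegral_congr e2, lintegral_indicator measurableSet_Ioo]
  -- integrability of the survival function
  have hgm : Measurable fun s => (P {ω | s < ρ ω}).toReal := hQm.ennreal_toReal
  have hg_ii : ∀ a b : ℝ, IntervalIntegrable (fun s => (P {ω | s < ρ ω}).toReal) volume a b := by
    intro a b
    rw [intervalIntegrable_iff]
    apply Integrable.mono' (g := fun _ => (1:ℝ))
      (integrableOn_const measure_Ioc_lt_top.ne) hgm.aestronglyMeasurable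
    refine ae_of_all _ fun s => ?_
    rw [Real.norm_eq_abs, abs_of_nonneg ENNReal.toReal_nonneg]
    exact ENNReal.toReal_le_of_le_ofReal zero_le_one (by simpa using prob_le_one (μ := P))
  -- conversion of the inner integral for t > 0
  have hconv : ∀ t : ℝ, 0 < t →
      ENNReal.ofReal (∫ s in (0:ℝ)..t, (P {ω | s < ρ ω}).toReal)
        = ∫⁻ s in Ioo 0 t, P {ω | s < ρ ω} ∂volume := by
    intro t ht
    rw [intervalIntegral.integral_of_le ht.le, integral_Ioc_eq_integral_Ioo,
      ofReal_integral_eq_lintegral_ofReal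
        (((intervalIntegrable_iff_integrableOn_Ioc_of_le ht.le).mp (hg_ii 0 t)).mono_set
          Ioo_subset_Ioc_self)
        (ae_of_all _ fun s => ENNReal.toReal_nonneg)]
    exact lintegral_congr fun s => ENNReal.ofReal_toReal (measure_ne_top P _)
  -- conversion of the RHS Bochner integral
  have hinner_cont : Continuous fun t => ∫ s in (0:ℝ)..t, (P {ω | s < ρ ω}).toReal :=
    intervalIntegral.continuous_primitive hg_ii 0
  have hRHS : ∫ t in Ioi (0:ℝ), (∫ s in (0:ℝ)..t, (P {ω | s < ρ ω}).toReal) ∂G.measure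
      = (∫⁻ t in Ioi (0:ℝ),
          (∫⁻ s in Ioo 0 t, P {ω | s < ρ ω} ∂volume) ∂G.measure).toReal := by
    rw [integral_eq_lintegral_of_nonneg_ae
      ((ae_restrict_iff' measurableSet_Ioi).2 (ae_of_all _ fun t ht =>
        intervalIntegral.integral_nonneg (le_of_lt ht) fun s _ => ENNReal.toReal_nonneg))
      hinner_cont.aestronglyMeasurable.restrict]
    congr 1
    exact lintegral_congr_ae
      ((ae_restrict_iff' measurableSet_Ioi).2 (ae_of_all _ fun t ht => hconv t ht))
  -- LHS conversion
  have hsubint : Integrable (fun ω => F (ρ ω) - F 0) P := hint.sub (integrable_const _)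
  have hsubnn : 0 ≤ᵐ[P] fun ω => F (ρ ω) - F 0 :=
    ae_of_all _ fun ω => sub_nonneg.2 (hFmono0 (ρ ω) (hρ0 ω))
  have hLHS : ENNReal.ofReal ((∫ ω, F (ρ ω) ∂P) - F 0)
      = ∫⁻ ω, ENNReal.ofReal (F (ρ ω) - F 0) ∂P := by
    rw [← ofReal_integral_eq_lintegral_ofReal hsubint hsubnn]
    congr 1
    rw [integral_sub hint (integrable_const _), integral_const, probReal_univ,
      one_smul]
  have main : ENNReal.ofReal ((∫ ω, F (ρ ω) ∂P) - F 0)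
      = ∫⁻ t in Ioi (0:ℝ), (∫⁻ s in Ioo 0 t, P {ω | s < ρ ω} ∂volume) ∂G.measure := by
    rw [hLHS, L1]
    exact lintegral_congr_ae
      ((ae_restrict_iff' measurableSet_Ioi).2 (ae_of_all _ fun t ht => L2 t ht))
  have hnn2 : 0 ≤ (∫ ω, F (ρ ω) ∂P) - F 0 := by
    have h1 : F 0 ≤ ∫ ω, F (ρ ω) ∂P := by
      calc F 0 = ∫ _ω, F 0 ∂P := by
            rw [integral_const, probReal_univ, one_smul]
        _ ≤ ∫ ω, F (ρ ω) ∂P :=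
            integral_mono (integrable_const _) hint (fun ω => hFmono0 (ρ ω) (hρ0 ω))
    linarith
  have final := congrArg ENNReal.toReal main
  rw [ENNReal.toReal_ofReal hnn2] at final
  linarith [hRHS, final]
end
end

section
/- Let (b_n) be the sequence of step-function barriers from the discrete construction embedding the discretized laws μ_n of a target law μ with supp(μ) ⊆ [0,β] and β ∈ supp(μ). Then for every ε > 0 there exists t_ε > 0 with b_n(t_ε) > β − ε for all n ≥ 1; in particular the sequence of generalized distribution functions (b_n) is tight. -/
open MeasureTheory ProbabilityTheory Filter Set
open scoped ENNReal NNReal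

noncomputable section

variable {Ω : Type*} [MeasurableSpace Ω]

namespace TightAux

/-- increment σ-algebras -/
def incSigma (B : ℝ → Ω → ℝ) (k : ℕ) : MeasurableSpace Ω :=
  MeasurableSpace.comap (fun ω => B (k + 1 : ℝ) ω - B (k : ℝ) ω) inferInstance

lemma measurable_inc_of_le {B : ℝ → Ω → ℝ} (hB : IsStandardBM P B) {i : ℕ} {m : ℝ}
    (him : (i : ℝ) + 1 ≤ m) :
    @Measurable Ω ℝ (⨆ u ∈ Set.Icc (0:ℝ) m, MeasurableSpace.comap (B u) inferInstance) _
      (fun ω => B (i + 1 : ℝ) ω - B (i : ℝ) ω) := by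
  have hBu : ∀ u : ℝ, u ∈ Set.Icc (0:ℝ) m →
      @Measurable Ω ℝ (⨆ u ∈ Set.Icc (0:ℝ) m, MeasurableSpace.comap (B u) inferInstance) _ (B u) := by
    intro u hu
    rw [measurable_iff_comap_le]
    exact le_iSup₂ (f := fun u _ => MeasurableSpace.comap (B u) inferInstance) u hu
  have h1 : ((i : ℝ) + 1) ∈ Set.Icc (0:ℝ) m :=
    ⟨by positivity, him⟩
  have h2 : ((i : ℝ)) ∈ Set.Icc (0:ℝ) m :=
    ⟨Nat.cast_nonneg i, le_trans (by linarith) him⟩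
  exact Measurable.sub (hBu _ h1) (hBu _ h2)


lemma iIndep_inc {P : Measure Ω} {B : ℝ → Ω → ℝ} (hB : IsStandardBM P B) :
    iIndep (incSigma B) P := by
  have hP := hB.isProb
  rw [iIndep_iff]
  have key : ∀ m : ℕ, ∀ S : Finset ℕ, (∀ i ∈ S, i < m) → ∀ f : ℕ → Set Ω,
      (∀ i ∈ S, MeasurableSet[incSigma B i] (f i)) →
      P (⋂ i ∈ S, f i) = ∏ i ∈ S, P (f i) := by
    intro m
    induction m with
    | zero =>
      intro S hS f hf
      have : S = ∅ := Finset.eq_empty_of_forall_notMem fun i hi => Nat.not_lt_zero i (hS i hi)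
      subst this; simp
    | succ m ih =>
      intro S hS f hf
      have hlt : ∀ i ∈ S.erase m, i < m := fun i hi =>
        lt_of_le_of_ne (Nat.lt_succ_iff.mp (hS i (Finset.mem_of_mem_erase hi)))
          (Finset.ne_of_mem_erase hi)
      by_cases hm : m ∈ S
      · have hrest : MeasurableSet[⨆ u ∈ Set.Icc (0:ℝ) (m:ℝ),
            MeasurableSpace.comap (B u) inferInstance] (⋂ i ∈ S.erase m, f i) := by
          refine Finset.measurableSet_biInter _ fun i hi => ?_
          obtain ⟨s, hs, heq⟩ := MeasurableSpace.measurableSet_comap.mp (hf i (Finset.mem_of_mem_erase hi))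
          rw [← heq]
          exact measurable_inc_of_le hB (by exact_mod_cast Nat.succ_le_of_lt (hlt i hi)) hs
        have hind := hB.indep (m:ℝ) ((m:ℝ)+1) (Nat.cast_nonneg m) (by linarith)
        rw [Indep_iff] at hind
        have step := hind (f m) (⋂ i ∈ S.erase m, f i) (hf m hm) hrest
        rw [← Finset.insert_erase hm, Finset.set_biInter_insert,
          Finset.prod_insert (Finset.notMem_erase _ _), step,
          ih (S.erase m) hlt f (fun i hi => hf i (Finset.mem_of_mem_erase hi))]
      · exact ih S (fun i hi => lt_of_le_of_ne (Nat.lt_succ_iff.mp (hS i hi))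
          (fun h => hm (h ▸ hi))) f hf
  intro S f hf
  exact key (S.sup id + 1) S (fun i hi => Nat.lt_succ_of_le (Finset.le_sup (f:=id) hi)) f hf

end TightAux

namespace Part2
variable {P : Measure Ω} {B : ℝ → Ω → ℝ}

/-- the event that the discrete-time values of `B` are unbounded above -/
def unbEvent (B : ℝ → Ω → ℝ) : Set Ω := {ω | ∀ N : ℕ, ∃ k : ℕ, (N:ℝ) ≤ B (k:ℝ) ω}

lemma unbEvent_eq (B : ℝ → Ω → ℝ) (n : ℕ) :
    unbEvent B = {ω | ∀ N : ℕ, ∃ k : ℕ, n ≤ k ∧ (N:ℝ) ≤ B (k:ℝ) ω - B (n:ℝ) ω} := by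
  ext ω
  constructor
  · intro hω N
    obtain ⟨C, hC⟩ := ((Finset.range n).image (fun k : ℕ => B (k:ℝ) ω)).bddAbove
    obtain ⟨N', hN'⟩ := exists_nat_ge (max (C+1) ((N:ℝ) + B (n:ℝ) ω))
    obtain ⟨k, hk⟩ := hω N'
    refine ⟨k, ?_, ?_⟩
    · by_contra hkn
      push_neg at hkn
      have : B (k:ℝ) ω ≤ C := hC (Finset.mem_image_of_mem _ (Finset.mem_range.mpr hkn))
      have h1 : C + 1 ≤ (N' : ℝ) := le_trans (le_max_left _ _) hN'
      linarith
    · have h2 : (N:ℝ) + B (n:ℝ) ω ≤ (N' : ℝ) := le_trans (le_max_right _ _) hN'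
      linarith
  · intro hω N
    obtain ⟨N', hN'⟩ := exists_nat_ge ((N:ℝ) - B (n:ℝ) ω)
    obtain ⟨k, _, hk⟩ := hω N'
    exact ⟨k, by linarith⟩

lemma measurable_unbEvent_tail (hB : IsStandardBM P B) (n : ℕ) :
    MeasurableSet[⨆ k ≥ n, TightAux.incSigma B k] (unbEvent B) := by
  have hdiff : ∀ k : ℕ, n ≤ k → @Measurable Ω ℝ (⨆ k ≥ n, TightAux.incSigma B k) _
      (fun ω => B (k:ℝ) ω - B (n:ℝ) ω) := by
    intro k hk
    obtain ⟨j, rfl⟩ := Nat.exists_eq_add_of_le hk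
    have hsum : (fun ω => B ((n+j : ℕ):ℝ) ω - B (n:ℝ) ω)
        = fun ω => ∑ i ∈ Finset.range j, (B (((n+i : ℕ):ℝ)+1) ω - B ((n+i:ℕ):ℝ) ω) := by
      funext ω
      have h := Finset.sum_range_sub (f := fun i => B ((n+i:ℕ):ℝ) ω) j
      have h2 : ∀ i, B ((n+(i+1):ℕ):ℝ) ω = B (((n+i:ℕ):ℝ)+1) ω := by
        intro i; congr 1; push_cast; ring
      simp only [h2, Nat.add_zero] at h
      exact h.symm
    rw [hsum]
    refine Finset.measurable_sum _ fun i _ => ?_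
    have hle : TightAux.incSigma B (n+i) ≤ ⨆ k ≥ n, TightAux.incSigma B k :=
      le_iSup₂ (f := fun k (_ : k ≥ n) => TightAux.incSigma B k) (n+i) (Nat.le_add_right n i)
    have : @Measurable Ω ℝ (TightAux.incSigma B (n+i)) _
        (fun ω => B (((n+i:ℕ):ℝ)+1) ω - B ((n+i:ℕ):ℝ) ω) := by
      rw [measurable_iff_comap_le]
      exact le_rfl
    exact this.mono hle le_rfl
  rw [unbEvent_eq B n]
  have heq : {ω | ∀ N : ℕ, ∃ k : ℕ, n ≤ k ∧ (N:ℝ) ≤ B (k:ℝ) ω - B (n:ℝ) ω}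
      = ⋂ N : ℕ, ⋃ k : ℕ, ⋃ (_ : n ≤ k), (fun ω => B (k:ℝ) ω - B (n:ℝ) ω) ⁻¹' Ici (N:ℝ) := by
    ext ω; simp [Set.mem_iInter, Set.mem_iUnion, Set.mem_preimage, Set.mem_Ici]
  rw [heq]
  exact MeasurableSet.iInter fun N => MeasurableSet.iUnion fun k =>
    MeasurableSet.iUnion fun hk => (hdiff k hk) measurableSet_Ici

end Part2

namespace Part3
variable {P : Measure Ω} {B : ℝ → Ω → ℝ}

lemma prob_cross (hB : IsStandardBM P B) {c : ℝ} (hc : 0 < c) :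
    P {ω | c ≤ B (c*c) ω} = gaussianReal 0 1 (Ici 1) := by
  have hmap : P.map (B (c*c)) = gaussianReal 0 (Real.toNNReal (c*c)) := by
    have h := hB.gauss 0 (c*c) le_rfl (by positivity)
    have heq : (fun ω => B (c*c) ω - B 0 ω) = B (c*c) := by
      funext ω; rw [hB.init ω, sub_zero]
    rw [heq, sub_zero] at h
    exact h
  have h1 : P {ω | c ≤ B (c*c) ω} = (P.map (B (c*c))) (Ici c) := by
    rw [Measure.map_apply (hB.meas _) measurableSet_Ici]
    rfl
  have h2 : (gaussianReal 0 1).map (c * ·) = gaussianReal 0 (Real.toNNReal (c*c)) := by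
    rw [gaussianReal_map_const_mul c]
    congr 1
    · ring
    · ext
      rw [Real.coe_toNNReal _ (by positivity)]
      push_cast
      ring
  have h3 : (c * ·) ⁻¹' (Ici c) = Ici (1:ℝ) := by
    ext x
    simp only [Set.mem_preimage, Set.mem_Ici]
    exact le_mul_iff_one_le_right hc
  rw [h1, hmap, ← h2, Measure.map_apply (measurable_const_mul c) measurableSet_Ici, h3]

lemma prob_unbEvent (hB : IsStandardBM P B) : P (Part2.unbEvent B) = 1 := by
  have hP := hB.isProb
  set p0 : ℝ≥0∞ := gaussianReal 0 1 (Ici 1) with hp0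
  have hp0pos : 0 < p0 := by
    rw [pos_iff_ne_zero]
    intro h
    have hvol := gaussianReal_absolutelyContinuous' 0 one_ne_zero h
    simp [Real.volume_Ici] at hvol
  -- events A j
  set A : ℕ → Set Ω := fun j => {ω | ((j:ℝ)+1) ≤ B (((j:ℝ)+1)*((j:ℝ)+1)) ω} with hA
  have hPA : ∀ j : ℕ, P (A j) = p0 := fun j => prob_cross hB (by positivity)
  have hAmeas : ∀ j, MeasurableSet (A j) := fun j => (hB.meas _) measurableSet_Ici
  set U : ℕ → Set Ω := fun n => ⋃ j, ⋃ (_ : n ≤ j), A j with hU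
  have hUmeas : ∀ n, MeasurableSet (U n) :=
    fun n => MeasurableSet.iUnion fun j => MeasurableSet.iUnion fun _ => hAmeas j
  have hUanti : Antitone U := by
    intro a b hab
    exact Set.iUnion₂_subset fun j hj => Set.subset_iUnion₂ (s := fun j _ => A j) j (hab.trans hj)
  have hUlb : ∀ n, p0 ≤ P (U n) := by
    intro n
    rw [← hPA n]
    exact measure_mono (Set.subset_iUnion₂ (s := fun j _ => A j) n le_rfl)
  have hInter : p0 ≤ P (⋂ n, U n) := by
    have ht := tendsto_measure_iInter_atTop (μ := P)
      (fun n => (hUmeas n).nullMeasurableSet) hUanti ⟨0, measure_ne_top _ _⟩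
    exact ge_of_tendsto ht (Filter.Eventually.of_forall hUlb)
  have hsub : (⋂ n, U n) ⊆ Part2.unbEvent B := by
    intro ω hω N
    have hωN := Set.mem_iInter.mp hω N
    simp only [hU, Set.mem_iUnion] at hωN
    obtain ⟨j, hj, hjω⟩ := hωN
    refine ⟨(j+1)*(j+1), ?_⟩
    have hcast : (((j+1)*(j+1) : ℕ) : ℝ) = ((j:ℝ)+1)*((j:ℝ)+1) := by push_cast; ring
    rw [hcast]
    have : (N:ℝ) ≤ (j:ℝ)+1 := by
      have : (N:ℝ) ≤ (j:ℝ) := Nat.cast_le.mpr hj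
      linarith
    exact le_trans this hjω
  have hpos : 0 < P (Part2.unbEvent B) := lt_of_lt_of_le hp0pos (hInter.trans (measure_mono hsub))
  have htail : MeasurableSet[limsup (TightAux.incSigma B) atTop] (Part2.unbEvent B) := by
    rw [limsup_eq_iInf_iSup_of_nat, MeasurableSpace.measurableSet_iInf]
    intro n
    exact Part2.measurable_unbEvent_tail hB n
  have hle : ∀ n, TightAux.incSigma B n ≤ ‹MeasurableSpace Ω› := fun n =>
    measurable_iff_comap_le.mp ((hB.meas _).sub (hB.meas _))
  rcases measure_zero_or_one_of_measurableSet_limsup_atTop hle (TightAux.iIndep_inc hB) htail with h | h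
  · exact absurd h hpos.ne'
  · exact h

end Part3

namespace Part4
variable {P : Measure Ω} {B : ℝ → Ω → ℝ}

lemma key_inclusion (hB : IsStandardBM P B) {b : ℝ → ℝ} {β : ℝ}
    (hmono : MonotoneOn b (Ioi 0)) (hle : ∀ t > (0:ℝ), b t ≤ β)
    {γ : ℝ} (hγ : 0 ≤ γ) {m : ℕ} (hm1 : 1 ≤ m) (hbm : b m ≤ γ) {ω : Ω}
    (h : γ < stoppedValue B (hitTime B fun t x => b t ≤ x) ω) :
    ∀ k : ℕ, 1 ≤ k → k ≤ m → B (k:ℝ) ω < β := by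
  set τ : ℝ≥0∞ := hitTime B (fun t x => b t ≤ x) ω with hτ
  have hsv : stoppedValue B (hitTime B fun t x => b t ≤ x) ω = B τ.toReal ω := rfl
  have hτ0 : τ ≠ 0 := by
    intro h0
    rw [hsv, h0] at h
    simp only [ENNReal.toReal_zero] at h
    rw [hB.init ω] at h
    linarith
  have hτtop : τ ≠ ⊤ := by
    intro h0
    rw [hsv, h0] at h
    simp only [ENNReal.toReal_top] at h
    rw [hB.init ω] at h
    linarith
  set T : ℝ := τ.toReal with hT
  have hTpos : 0 < T := ENNReal.toReal_pos hτ0 hτtop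
  have hnot : ∀ s : ℝ, 0 < s → s < T → B s ω < b s := by
    intro s hs hsT
    by_contra hc
    push_neg at hc
    have hmem : ENNReal.ofReal s ∈ ENNReal.ofReal '' {t : ℝ | 0 < t ∧ b t ≤ B t ω} :=
      ⟨s, ⟨hs, hc⟩, rfl⟩
    have hles : τ ≤ ENNReal.ofReal s := sInf_le hmem
    have hlt : ENNReal.ofReal s < τ := by
      have : ENNReal.ofReal s < ENNReal.ofReal T := by
        rw [ENNReal.ofReal_lt_ofReal_iff hTpos]
        exact hsT
      rwa [ENNReal.ofReal_toReal hτtop] at this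
    exact absurd (lt_of_le_of_lt hles hlt) (lt_irrefl _)
  have hBT : B T ω ≤ b T := by
    have hcont : Tendsto (fun s => B s ω) (nhdsWithin T (Iio T)) (nhds (B T ω)) :=
      ((hB.cont ω).tendsto T).mono_left nhdsWithin_le_nhds
    refine le_of_tendsto hcont ?_
    filter_upwards [Ioo_mem_nhdsLT hTpos] with s hs
    exact le_of_lt (lt_of_lt_of_le (hnot s hs.1 hs.2)
      (hmono (Set.mem_Ioi.mpr hs.1) (Set.mem_Ioi.mpr hTpos) hs.2.le))
  have hbT : γ < b T := lt_of_lt_of_le (by rw [hsv] at h; exact h) hBT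
  have hmT : (m:ℝ) < T := by
    by_contra hc
    push_neg at hc
    have hmpos : (0:ℝ) < (m:ℝ) := by exact_mod_cast hm1
    have : b T ≤ b m := hmono (Set.mem_Ioi.mpr hTpos) (Set.mem_Ioi.mpr hmpos) hc
    linarith
  intro k hk1 hkm
  have hkpos : (0:ℝ) < (k:ℝ) := by exact_mod_cast hk1
  have hkT : (k:ℝ) < T := lt_of_le_of_lt (by exact_mod_cast hkm) hmT
  exact lt_of_lt_of_le (hnot k hkpos hkT) (hle k hkpos)

end Part4

/-- **Tightness.** If the step boundaries `bₙ ≤ β` embed the discretized laws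
`μₙ` of `μ` (with `supp μ ⊆ [0,β]`, `β ∈ supp μ`, and `μₙ(x,∞) ≥ μ(x,∞)` as in the
discrete construction), then for every `ε > 0` there is `t_ε > 0` with `bₙ(t_ε) > β - ε`
for all `n`; in particular the sequence `(bₙ)` is tight. -/
theorem discrete_boundaries_tight
    (P : Measure Ω) (B : ℝ → Ω → ℝ) (hB : IsStandardBM P B)
    (β : ℝ) (hβ : 0 < β) (μ : Measure ℝ) [IsProbabilityMeasure μ]
    (μn : ℕ → Measure ℝ) (hμn : ∀ n, IsProbabilityMeasure (μn n))
    (hsupp : μ (Icc 0 β)ᶜ = 0) (hβsupp : ∀ ε > (0:ℝ), 0 < μ (Ioc (β - ε) β))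
    (bn : ℕ → ℝ → ℝ)
    (hbnm : ∀ n, MonotoneOn (bn n) (Ioi 0))
    (hbnlc : ∀ n, ∀ t > (0:ℝ), Tendsto (bn n) (nhdsWithin t (Iio t)) (nhds (bn n t)))
    (hbnle : ∀ n, ∀ t > (0:ℝ), bn n t ≤ β)
    (hlaw : ∀ n, P.map (stoppedValue B (hitTime B fun t x => bn n t ≤ x)) = μn n)
    (hdom : ∀ n, ∀ x : ℝ, μ (Ioi x) ≤ μn n (Ioi x)) :
    ∀ ε > (0:ℝ), ∃ tε > (0:ℝ), ∀ n, β - ε < bn n tε := by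
  have hP := hB.isProb
  intro ε hε
  by_contra hcon
  push_neg at hcon
  set γ : ℝ := max (β - ε) 0 with hγdef
  have hγ0 : 0 ≤ γ := le_max_right _ _
  have hγβ : γ < β := max_lt (by linarith) hβ
  set δ : ℝ≥0∞ := μ (Ioi γ) with hδdef
  have hδpos : 0 < δ := by
    have h1 := hβsupp (β - γ) (by linarith)
    have h2 : Ioc (β - (β - γ)) β ⊆ Ioi γ := by
      intro x hx
      simp only [Set.mem_Ioc, Set.mem_Ioi] at *
      linarith [hx.1]
    exact lt_of_lt_of_le h1 (measure_mono h2)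
  set G : ℕ → Set Ω := fun m =>
    ⋂ k : ℕ, ⋂ (_ : 1 ≤ k), ⋂ (_ : k ≤ m), (B (k:ℝ)) ⁻¹' (Iio β) with hG
  have hGmem : ∀ m ω, ω ∈ G m ↔ ∀ k : ℕ, 1 ≤ k → k ≤ m → B (k:ℝ) ω < β := by
    intro m ω
    simp [hG, Set.mem_iInter]
  have hGmeas : ∀ m, MeasurableSet (G m) := fun m =>
    MeasurableSet.iInter fun k => MeasurableSet.iInter fun _ =>
      MeasurableSet.iInter fun _ => (hB.meas _) measurableSet_Iio
  have hGanti : Antitone G := fun a b hab ω hω => (hGmem a ω).mpr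
    fun k hk1 hka => (hGmem b ω).mp hω k hk1 (hka.trans hab)
  have hInter0 : P (⋂ m, G m) = 0 := by
    have hunbmeas : MeasurableSet (Part2.unbEvent B) := by
      have heq : Part2.unbEvent B = ⋂ N : ℕ, ⋃ k : ℕ, (B (k:ℝ)) ⁻¹' Ici (N:ℝ) := by
        ext ω; simp [Part2.unbEvent]
      rw [heq]
      exact MeasurableSet.iInter fun N => MeasurableSet.iUnion fun k =>
        (hB.meas _) measurableSet_Ici
    have hsub : (⋂ m, G m) ⊆ (Part2.unbEvent B)ᶜ := by
      intro ω hω hunb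
      obtain ⟨N, hN⟩ := exists_nat_ge β
      obtain ⟨k, hk⟩ := hunb N
      have hβk : β ≤ B (k:ℝ) ω := le_trans hN hk
      have hk1 : 1 ≤ k := by
        rcases Nat.eq_zero_or_pos k with rfl | h
        · rw [Nat.cast_zero, hB.init ω] at hβk
          linarith
        · exact h
      have := (hGmem k ω).mp (Set.mem_iInter.mp hω k) k hk1 le_rfl
      linarith
    have hcompl : P (Part2.unbEvent B)ᶜ = 0 := by
      rw [measure_compl hunbmeas (measure_ne_top _ _), Part3.prob_unbEvent hB]
      simp
    exact le_antisymm (le_trans (measure_mono hsub) hcompl.le) (zero_le)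
  have htend : Tendsto (fun m => P (G m)) atTop (nhds 0) := by
    have h := tendsto_measure_iInter_atTop (μ := P)
      (fun m => (hGmeas m).nullMeasurableSet) hGanti ⟨0, measure_ne_top _ _⟩
    rw [hInter0] at h
    exact h
  obtain ⟨m, hm⟩ := ((htend.eventually_lt_const hδpos).and (eventually_ge_atTop 1)).exists
  obtain ⟨hmlt, hm1⟩ := hm
  have hmpos : (0:ℝ) < (m:ℝ) := by exact_mod_cast Nat.lt_of_lt_of_le Nat.zero_lt_one hm1
  obtain ⟨n, hn⟩ := hcon (m:ℝ) hmpos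
  have hbnγ : bn n (m:ℝ) ≤ γ := le_trans hn (le_max_left _ _)
  have hae : AEMeasurable (stoppedValue B (hitTime B fun t x => bn n t ≤ x)) P := by
    by_contra hna
    have h0 := Measure.map_of_not_aemeasurable hna
    rw [hlaw n] at h0
    have h1 := (hμn n).measure_univ
    rw [h0] at h1
    simp at h1
  have hδle : δ ≤ P (G m) := by
    calc δ ≤ μn n (Ioi γ) := hdom n γ
    _ = P ((stoppedValue B (hitTime B fun t x => bn n t ≤ x)) ⁻¹' (Ioi γ)) := by
        rw [← hlaw n, Measure.map_apply_of_aemeasurable hae measurableSet_Ioi]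
    _ ≤ P (G m) := by
        refine measure_mono fun ω hω => ?_
        exact (hGmem m ω).mpr
          (Part4.key_inclusion hB (hbnm n) (hbnle n) hγ0 hm1 hbnγ hω)
  exact absurd hδle (not_le.mpr hmlt)
end
end
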